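/- arXiv:1810.07422 — 2 statements merged into one kernel-verified Lean document; each statement's English description precedes it below -/
import Mathlib

section
/- Every permutation S in U can be partitioned into kn/(3k−3) strictly decreasing subsequences in exactly one way; moreover, two distinct permutations from U have distinct such partitions of the position set {1,…,n}. -/
namespace Gamma

/-- `P` is a permutation of `{1, ..., n}` (normalized to `0` outside `[1, n]`). -/
def IsPerm (n : ℕ) (P : ℕ → ℕ) : Prop :=
  (∀ p, 1 ≤ p → p ≤ n → 1 ≤ P p ∧ P p ≤ n) ∧
  (∀ p q, 1 ≤ p → p ≤ n → 1 ≤ q → q ≤ n → P p = P q → p = q) ∧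
  (∀ p, ¬ (1 ≤ p ∧ p ≤ n) → P p = 0)

/-- `f` assigns each middle position `p ∈ {ℓ+1, ..., n-ℓ}` a part index in `{1, ..., ℓ}`. -/
def GammaValid (n l : ℕ) (f : ℕ → ℕ) : Prop :=
  ∀ p, l + 1 ≤ p → p ≤ n - l → 1 ≤ f p ∧ f p ≤ l

/-- The index of the part containing position `p`: part `P_i` contains positions `i`
and `n - ℓ + i`, and each middle position `p` with `f p = i`. -/
def partOf (n l : ℕ) (f : ℕ → ℕ) (p : ℕ) : ℕ :=
  if p ≤ l then p else if n - l + 1 ≤ p then p - (n - l) else f p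

/-- `P` is the permutation `P_f` of `{1, ..., n}` determined by `f`: along each part
(in increasing position order) the values strictly decrease, and all values on part
`P_i` are smaller than all values on part `P_j` whenever `i < j`. -/
def IsGammaPerm (n l : ℕ) (f : ℕ → ℕ) (P : ℕ → ℕ) : Prop :=
  IsPerm n P ∧
  (∀ p q, 1 ≤ p → p < q → q ≤ n → partOf n l f p = partOf n l f q → P q < P p) ∧
  (∀ p q, 1 ≤ p → p ≤ n → 1 ≤ q → q ≤ n → partOf n l f p < partOf n l f q → P p < P q)

/-- The `b`-th block of `S` (blocks of length `3k-3`), shifted so as to be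
a sequence of values in `{1, ..., 3k-3}` on positions `{1, ..., 3k-3}`
(normalized to `0` elsewhere). -/
def shiftBlock (k b : ℕ) (S : ℕ → ℕ) : ℕ → ℕ :=
  fun p => if 1 ≤ p ∧ p ≤ 3 * k - 3 then S (b * (3 * k - 3) + p) - b * (3 * k - 3) else 0

/-- `S` belongs to the family `U`: `S` is a permutation of `{1, ..., n}` and every
block of length `3k-3`, after shifting, is a permutation from the family `Γ` with
parameters `n' = 3k-3` and `ℓ = k`. -/
def InU (k n : ℕ) (S : ℕ → ℕ) : Prop :=
  IsPerm n S ∧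
  ∀ b, b < n / (3 * k - 3) →
    ∃ f, GammaValid (3 * k - 3) k f ∧ IsGammaPerm (3 * k - 3) k f (shiftBlock k b S)

/-- `g` is (the labelling of) a partition of the positions `{1, ..., n}` of the
permutation `S` into `D` strictly decreasing subsequences. -/
def IsDecPartitionN (n D : ℕ) (S g : ℕ → ℕ) : Prop :=
  (∀ p, 1 ≤ p → p ≤ n → 1 ≤ g p ∧ g p ≤ D) ∧
  (∀ p q, 1 ≤ p → p < q → q ≤ n → g p = g q → S q < S p)

/- ## helpers -/

lemma mul_lt_helper {a b c : ℕ} (h : a < b) : a*c + c ≤ b*c := by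
  have h2 : (a+1)*c ≤ b*c := Nat.mul_le_mul_right c (by omega)
  rw [add_mul, one_mul] at h2; exact h2

lemma partOf_front (k : ℕ) (f : ℕ → ℕ) (p : ℕ) (h : p ≤ k) :
    partOf (3*k-3) k f p = p := by
  unfold partOf; rw [if_pos h]

lemma partOf_back (k : ℕ) (hk : 4 ≤ k) (f : ℕ → ℕ) (j : ℕ) (h1 : 1 ≤ j) (h2 : j ≤ k) :
    partOf (3*k-3) k f (2*k-3+j) = j := by
  unfold partOf
  rw [if_neg (by omega), if_pos (by omega)]
  omega

lemma partOf_mid (k : ℕ) (hk : 4 ≤ k) (f : ℕ → ℕ) (p : ℕ) (h1 : k+1 ≤ p) (h2 : p ≤ 2*k-3) :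
    partOf (3*k-3) k f p = f p := by
  unfold partOf; rw [if_neg (by omega), if_neg (by omega)]

lemma partOf_le (k : ℕ) (hk : 4 ≤ k) (f : ℕ → ℕ) (hf : GammaValid (3*k-3) k f)
    (p : ℕ) (h1 : 1 ≤ p) (h2 : p ≤ 3*k-3) :
    1 ≤ partOf (3*k-3) k f p ∧ partOf (3*k-3) k f p ≤ k := by
  unfold partOf; split_ifs with ha hb
  · omega
  · omega
  · exact hf p (by omega) (by omega)

lemma isPerm_injOn (m : ℕ) (T : ℕ → ℕ) (hT : IsPerm m T) :
    Set.InjOn T (Finset.Icc 1 m) := by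
  intro a ha b hb hab
  simp only [Finset.coe_Icc, Set.mem_Icc] at ha hb
  exact hT.2.1 a b ha.1 ha.2 hb.1 hb.2 hab

lemma isPerm_image (m : ℕ) (T : ℕ → ℕ) (hT : IsPerm m T) :
    (Finset.Icc 1 m).image T = Finset.Icc 1 m := by
  apply Finset.eq_of_subset_of_card_le
  · intro v hv
    simp only [Finset.mem_image, Finset.mem_Icc] at hv ⊢
    obtain ⟨q, ⟨h1, h2⟩, rfl⟩ := hv
    exact hT.1 q h1 h2
  · rw [Finset.card_image_of_injOn (isPerm_injOn m T hT)]

lemma rank_eq (m : ℕ) (T : ℕ → ℕ) (hT : IsPerm m T) (p : ℕ) (h1 : 1 ≤ p) (h2 : p ≤ m) :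
    T p = ((Finset.Icc 1 m).filter (fun q => T q ≤ T p)).card := by
  have hinj := isPerm_injOn m T hT
  have himg : ((Finset.Icc 1 m).filter (fun q => T q ≤ T p)).image T = Finset.Icc 1 (T p) := by
    ext v
    simp only [Finset.mem_image, Finset.mem_filter, Finset.mem_Icc]
    constructor
    · rintro ⟨q, ⟨⟨hq1, hq2⟩, hle⟩, rfl⟩
      exact ⟨(hT.1 q hq1 hq2).1, hle⟩
    · rintro ⟨hv1, hv2⟩
      have hvm : v ∈ (Finset.Icc 1 m).image T := by
        rw [isPerm_image m T hT]
        have := (hT.1 p h1 h2).2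
        exact Finset.mem_Icc.mpr ⟨hv1, by omega⟩
      obtain ⟨q, hq, rfl⟩ := Finset.mem_image.mp hvm
      rw [Finset.mem_Icc] at hq
      exact ⟨q, ⟨hq, hv2⟩, rfl⟩
  have hinj2 : Set.InjOn T ((Finset.Icc 1 m).filter (fun q => T q ≤ T p)) :=
    hinj.mono (by exact_mod_cast Finset.filter_subset _ _)
  calc T p = (Finset.Icc 1 (T p)).card := by rw [Nat.card_Icc]; omega
    _ = (((Finset.Icc 1 m).filter (fun q => T q ≤ T p)).image T).card := by rw [himg]
    _ = _ := Finset.card_image_of_injOn hinj2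

lemma gamma_unique (m l : ℕ) (f T T' : ℕ → ℕ)
    (hT : IsGammaPerm m l f T) (hT' : IsGammaPerm m l f T') : ∀ p, T p = T' p := by
  intro p
  by_cases hp : 1 ≤ p ∧ p ≤ m
  · have key : ∀ (U : ℕ → ℕ), IsGammaPerm m l f U → ∀ q, 1 ≤ q → q ≤ m →
        (U q ≤ U p ↔ (q = p ∨ partOf m l f q < partOf m l f p ∨
          (partOf m l f q = partOf m l f p ∧ p < q))) := by
      intro U hU q hq1 hq2
      constructor
      · intro hle
        by_contra hC
        push_neg at hC
        obtain ⟨hne, hnlt, hniff⟩ := hC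
        rcases Nat.lt_trichotomy (partOf m l f q) (partOf m l f p) with h | h | h
        · omega
        · have hqp : q < p := by
            have := hniff h
            omega
          have := hU.2.1 q p hq1 hqp hp.2 h
          omega
        · have := hU.2.2 p q hp.1 hp.2 hq1 hq2 h
          omega
      · rintro (rfl | hlt | ⟨heq, hpq⟩)
        · exact le_refl _
        · exact le_of_lt (hU.2.2 q p hq1 hq2 hp.1 hp.2 hlt)
        · exact le_of_lt (hU.2.1 p q hp.1 hpq hq2 heq.symm)
    rw [rank_eq m T hT.1 p hp.1 hp.2, rank_eq m T' hT'.1 p hp.1 hp.2]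
    congr 1
    apply Finset.filter_congr
    intro q hq
    rw [Finset.mem_Icc] at hq
    simp only [key T hT q hq.1 hq.2, key T' hT' q hq.1 hq.2]
  · rw [hT.1.2.2 p hp, hT'.1.2.2 p hp]

lemma block_rel (k : ℕ) (hk : 4 ≤ k) (f T g : ℕ → ℕ)
    (hf : GammaValid (3*k-3) k f) (hT : IsGammaPerm (3*k-3) k f T)
    (hg : ∀ p q, 1 ≤ p → p < q → q ≤ 3*k-3 → g p = g q → T q < T p)
    (hcard : ((Finset.Icc 1 (3*k-3)).image g).card ≤ k) :
    ∀ p q, 1 ≤ p → p ≤ 3*k-3 → 1 ≤ q → q ≤ 3*k-3 →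
      (g p = g q ↔ partOf (3*k-3) k f p = partOf (3*k-3) k f q) := by
  have hfront : ∀ i j, 1 ≤ i → i < j → j ≤ k → g i ≠ g j := by
    intro i j h1 h2 h3 hgij
    have hTij : T i < T j := hT.2.2 i j (by omega) (by omega) (by omega) (by omega)
      (by rw [partOf_front k f i (by omega), partOf_front k f j h3]; omega)
    have := hg i j h1 h2 (by omega) hgij
    omega
  have hinjF : Set.InjOn g (Finset.Icc 1 k) := by
    intro a ha b hb hab
    simp only [Finset.coe_Icc, Set.mem_Icc] at ha hb
    rcases Nat.lt_trichotomy a b with h | h | h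
    · exact absurd hab (hfront a b ha.1 h hb.2)
    · exact h
    · exact absurd hab.symm (hfront b a hb.1 h ha.2)
  have hFcard : ((Finset.Icc 1 k).image g).card = k := by
    rw [Finset.card_image_of_injOn hinjF, Nat.card_Icc]; omega
  have hEq : (Finset.Icc 1 k).image g = (Finset.Icc 1 (3*k-3)).image g :=
    Finset.eq_of_subset_of_card_le
      (Finset.image_subset_image (Finset.Icc_subset_Icc le_rfl (by omega)))
      (by rw [hFcard]; exact hcard)
  have hmatch : ∀ p, 1 ≤ p → p ≤ 3*k-3 → ∃ i, 1 ≤ i ∧ i ≤ k ∧ g p = g i := by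
    intro p h1 h2
    have hm : g p ∈ (Finset.Icc 1 k).image g := by
      rw [hEq]; exact Finset.mem_image_of_mem g (Finset.mem_Icc.mpr ⟨h1, h2⟩)
    obtain ⟨i, hi, hgi⟩ := Finset.mem_image.mp hm
    rw [Finset.mem_Icc] at hi
    exact ⟨i, hi.1, hi.2, hgi.symm⟩
  have hbackne : ∀ j j', 1 ≤ j → j < j' → j' ≤ k → g (2*k-3+j) ≠ g (2*k-3+j') := by
    intro j j' h1 h2 h3 hgij
    have hTij : T (2*k-3+j) < T (2*k-3+j') := hT.2.2 _ _ (by omega) (by omega) (by omega) (by omega)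
      (by rw [partOf_back k hk f j h1 (by omega), partOf_back k hk f j' (by omega) h3]; omega)
    have := hg (2*k-3+j) (2*k-3+j') (by omega) (by omega) (by omega) hgij
    omega
  obtain ⟨ψ, hψ⟩ : ∃ ψ : ℕ → ℕ, ∀ j, 1 ≤ j → j ≤ k →
      (1 ≤ ψ j ∧ ψ j ≤ k ∧ g (2*k-3+j) = g (ψ j)) := by
    refine ⟨fun j => if h : 1 ≤ j ∧ j ≤ k then
      (hmatch (2*k-3+j) (by omega) (by omega)).choose else 0, fun j h1 h2 => ?_⟩
    simp only [dif_pos (And.intro h1 h2)]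
    exact (hmatch (2*k-3+j) (by omega) (by omega)).choose_spec
  have hψge : ∀ j, 1 ≤ j → j ≤ k → j ≤ ψ j := by
    intro j h1 h2
    by_contra hlt
    push_neg at hlt
    obtain ⟨ha, hb, hc⟩ := hψ j h1 h2
    have h5 := hg (ψ j) (2*k-3+j) ha (by omega) (by omega) hc.symm
    have h6 : T (ψ j) < T (2*k-3+j) := hT.2.2 _ _ ha (by omega) (by omega) (by omega)
      (by rw [partOf_front k f (ψ j) hb, partOf_back k hk f j h1 h2]; omega)
    omega
  have hψid : ∀ j, 1 ≤ j → j ≤ k → ψ j = j := by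
    have hψinj : ∀ j j', 1 ≤ j → j ≤ k → 1 ≤ j' → j' ≤ k → ψ j = ψ j' → j = j' := by
      intro j j' h1 h2 h3 h4 heq
      by_contra hne
      have hgg : g (2*k-3+j) = g (2*k-3+j') := by
        rw [(hψ j h1 h2).2.2, (hψ j' h3 h4).2.2, heq]
      rcases Nat.lt_trichotomy j j' with h | h | h
      · exact hbackne j j' h1 h h4 hgg
      · exact hne h
      · exact hbackne j' j h3 h h2 hgg.symm
    have hsum : ∑ j ∈ Finset.Icc 1 k, ψ j = ∑ j ∈ Finset.Icc 1 k, j := by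
      have himg : (Finset.Icc 1 k).image ψ = Finset.Icc 1 k := by
        apply Finset.eq_of_subset_of_card_le
        · intro v hv
          obtain ⟨j, hj, rfl⟩ := Finset.mem_image.mp hv
          rw [Finset.mem_Icc] at hj ⊢
          exact ⟨(hψ j hj.1 hj.2).1, (hψ j hj.1 hj.2).2.1⟩
        · rw [Finset.card_image_of_injOn]
          intro a ha b hb hab
          simp only [Finset.coe_Icc, Set.mem_Icc] at ha hb
          exact hψinj a b ha.1 ha.2 hb.1 hb.2 hab
      calc ∑ j ∈ Finset.Icc 1 k, ψ j = ∑ v ∈ (Finset.Icc 1 k).image ψ, v := by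
            rw [Finset.sum_image]
            intro a ha b hb hab
            simp only [Finset.coe_Icc, Set.mem_Icc] at ha hb
            exact hψinj a b ha.1 ha.2 hb.1 hb.2 hab
        _ = ∑ j ∈ Finset.Icc 1 k, j := by rw [himg]
    intro j h1 h2
    by_contra hne
    have hlt : j < ψ j := lt_of_le_of_ne (hψge j h1 h2) (Ne.symm hne)
    have : ∑ i ∈ Finset.Icc 1 k, i < ∑ i ∈ Finset.Icc 1 k, ψ i := by
      apply Finset.sum_lt_sum
      · intro i hi
        rw [Finset.mem_Icc] at hi
        exact hψge i hi.1 hi.2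
      · exact ⟨j, Finset.mem_Icc.mpr ⟨h1, h2⟩, hlt⟩
    omega
  have hback : ∀ j, 1 ≤ j → j ≤ k → g (2*k-3+j) = g j := by
    intro j h1 h2
    have h := (hψ j h1 h2).2.2
    rwa [hψid j h1 h2] at h
  have hmid : ∀ p, k+1 ≤ p → p ≤ 2*k-3 → g p = g (f p) := by
    intro p h1 h2
    have hfp := hf p (by omega) (by omega)
    obtain ⟨i, hi1, hi2, hgi⟩ := hmatch p (by omega) (by omega)
    have hle : f p ≤ i := by
      by_contra hlt
      push_neg at hlt
      have h5 := hg i p hi1 (by omega) (by omega) hgi.symm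
      have h6 : T i < T p := hT.2.2 i p hi1 (by omega) (by omega) (by omega)
        (by rw [partOf_front k f i hi2, partOf_mid k hk f p h1 h2]; omega)
      omega
    have hge2 : i ≤ f p := by
      by_contra hlt
      push_neg at hlt
      have hgpb : g p = g (2*k-3+i) := by rw [hback i hi1 hi2]; exact hgi
      have h5 := hg p (2*k-3+i) (by omega) (by omega) (by omega) hgpb
      have h6 : T p < T (2*k-3+i) := hT.2.2 p (2*k-3+i) (by omega) (by omega) (by omega) (by omega)
        (by rw [partOf_mid k hk f p h1 h2, partOf_back k hk f i hi1 hi2]; omega)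
      omega
    have hfi : f p = i := le_antisymm hle hge2
    rw [hfi]; exact hgi
  have hcanon : ∀ p, 1 ≤ p → p ≤ 3*k-3 → g p = g (partOf (3*k-3) k f p) := by
    intro p h1 h2
    by_cases hc1 : p ≤ k
    · rw [partOf_front k f p hc1]
    · by_cases hc2 : 2*k-2 ≤ p
      · have hp : p = 2*k-3 + (p - (2*k-3)) := by omega
        rw [hp, partOf_back k hk f (p - (2*k-3)) (by omega) (by omega)]
        exact hback _ (by omega) (by omega)
      · rw [partOf_mid k hk f p (by omega) (by omega)]
        exact hmid p (by omega) (by omega)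
  intro p q hp1 hp2 hq1 hq2
  have hPp := partOf_le k hk f hf p hp1 hp2
  have hPq := partOf_le k hk f hf q hq1 hq2
  constructor
  · intro h
    have h2 : g (partOf (3*k-3) k f p) = g (partOf (3*k-3) k f q) := by
      rw [← hcanon p hp1 hp2, ← hcanon q hq1 hq2]; exact h
    by_contra hne
    rcases Nat.lt_or_ge (partOf (3*k-3) k f p) (partOf (3*k-3) k f q) with hlt | hge
    · exact hfront _ _ hPp.1 hlt hPq.2 h2
    · exact hfront _ _ hPq.1 (by omega) hPp.2 h2.symm
  · intro h
    rw [hcanon p hp1 hp2, hcanon q hq1 hq2, h]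
lemma decomp (k n q : ℕ) (hk : 4 ≤ k) (hdvd : (3*k-3) ∣ n) (h1 : 1 ≤ q) (h2 : q ≤ n) :
    ∃ b p, b < n/(3*k-3) ∧ 1 ≤ p ∧ p ≤ 3*k-3 ∧ q = b*(3*k-3)+p := by
  have hm : 0 < 3*k-3 := by omega
  refine ⟨(q-1)/(3*k-3), (q-1)%(3*k-3)+1, ?_, by omega, ?_, ?_⟩
  · exact Nat.div_lt_div_of_lt_of_dvd hdvd (by omega)
  · have := Nat.mod_lt (q-1) hm; omega
  · have hdm := Nat.div_add_mod (q-1) (3*k-3)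
    have hco : (3*k-3) * ((q-1)/(3*k-3)) = (q-1)/(3*k-3) * (3*k-3) := mul_comm _ _
    omega

lemma blockIdx (k b p : ℕ) (hk : 4 ≤ k) (h1 : 1 ≤ p) (h2 : p ≤ 3*k-3) :
    (b*(3*k-3)+p-1)/(3*k-3) = b := by
  have h3 : b*(3*k-3)+p-1 = (3*k-3)*b + (p-1) := by
    have : b*(3*k-3) = (3*k-3)*b := mul_comm _ _
    omega
  rw [h3, Nat.mul_add_div (by omega), Nat.div_eq_of_lt (by omega)]
  omega

lemma pos_range (k n b p : ℕ) (hk : 4 ≤ k) (hdvd : (3*k-3) ∣ n)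
    (hb : b < n/(3*k-3)) (h1 : 1 ≤ p) (h2 : p ≤ 3*k-3) :
    1 ≤ b*(3*k-3)+p ∧ b*(3*k-3)+p ≤ n := by
  have hn : n/(3*k-3)*(3*k-3) = n := Nat.div_mul_cancel hdvd
  have h3 : b*(3*k-3) + (3*k-3) ≤ (n/(3*k-3))*(3*k-3) := mul_lt_helper hb
  omega

lemma value_eq (k b : ℕ) (S : ℕ → ℕ) (hT : IsPerm (3*k-3) (shiftBlock k b S))
    (p : ℕ) (h1 : 1 ≤ p) (h2 : p ≤ 3*k-3) :
    S (b*(3*k-3)+p) = b*(3*k-3) + shiftBlock k b S p := by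
  have h := hT.1 p h1 h2
  unfold shiftBlock at h ⊢
  rw [if_pos (And.intro h1 h2)] at h ⊢
  omega

lemma cross_lt (k n : ℕ) (S : ℕ → ℕ) (hk : 4 ≤ k) (hU : InU k n S)
    (b b' p q : ℕ) (hb : b < n/(3*k-3)) (hb' : b' < n/(3*k-3)) (hbb : b < b')
    (hp1 : 1 ≤ p) (hp2 : p ≤ 3*k-3) (hq1 : 1 ≤ q) (hq2 : q ≤ 3*k-3) :
    S (b*(3*k-3)+p) < S (b'*(3*k-3)+q) := by
  obtain ⟨f, hf, hGP⟩ := hU.2 b hb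
  obtain ⟨f', hf', hGP'⟩ := hU.2 b' hb'
  have hv := value_eq k b S hGP.1 p hp1 hp2
  have hv' := value_eq k b' S hGP'.1 q hq1 hq2
  have hb1 := hGP.1.1 p hp1 hp2
  have hb2 := hGP'.1.1 q hq1 hq2
  have h3 : b*(3*k-3) + (3*k-3) ≤ b'*(3*k-3) := mul_lt_helper hbb
  omega

def canonG (k n : ℕ) (F : ℕ → ℕ → ℕ) : ℕ → ℕ := fun q =>
  if 1 ≤ q ∧ q ≤ n then
    ((q-1)/(3*k-3))*k + partOf (3*k-3) k (F ((q-1)/(3*k-3))) (q - ((q-1)/(3*k-3))*(3*k-3))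
  else 1

lemma canonG_eq (k n b p : ℕ) (F : ℕ → ℕ → ℕ) (hk : 4 ≤ k) (hdvd : (3*k-3) ∣ n)
    (hb : b < n/(3*k-3)) (h1 : 1 ≤ p) (h2 : p ≤ 3*k-3) :
    canonG k n F (b*(3*k-3)+p) = b*k + partOf (3*k-3) k (F b) p := by
  unfold canonG
  rw [if_pos (pos_range k n b p hk hdvd hb h1 h2), blockIdx k b p hk h1 h2]
  have h3 : b*(3*k-3)+p - b*(3*k-3) = p := by omega
  rw [h3]
lemma main_rel (k n : ℕ) (hk : 4 ≤ k) (hdvd : (3*k-3) ∣ n) (S : ℕ → ℕ) (hU : InU k n S)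
    (F : ℕ → ℕ → ℕ)
    (hF : ∀ b, b < n/(3*k-3) → GammaValid (3*k-3) k (F b) ∧
      IsGammaPerm (3*k-3) k (F b) (shiftBlock k b S))
    (g : ℕ → ℕ) (hg : IsDecPartitionN n (k*n/(3*k-3)) S g) :
    (∀ b p q, b < n/(3*k-3) → 1 ≤ p → p ≤ 3*k-3 → 1 ≤ q → q ≤ 3*k-3 →
      (g (b*(3*k-3)+p) = g (b*(3*k-3)+q) ↔
        partOf (3*k-3) k (F b) p = partOf (3*k-3) k (F b) q)) ∧
    (∀ b b' p q, b < n/(3*k-3) → b' < n/(3*k-3) → b ≠ b' →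
      1 ≤ p → p ≤ 3*k-3 → 1 ≤ q → q ≤ 3*k-3 →
      g (b*(3*k-3)+p) ≠ g (b'*(3*k-3)+q)) := by
  have hcross : ∀ b b' p q, b < n/(3*k-3) → b' < n/(3*k-3) → b < b' →
      1 ≤ p → p ≤ 3*k-3 → 1 ≤ q → q ≤ 3*k-3 →
      g (b*(3*k-3)+p) ≠ g (b'*(3*k-3)+q) := by
    intro b b' p q hb hb' hbb hp1 hp2 hq1 hq2 heq
    have hml := mul_lt_helper (c := 3*k-3) hbb
    have hpos := pos_range k n b p hk hdvd hb hp1 hp2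
    have hpos' := pos_range k n b' q hk hdvd hb' hq1 hq2
    have hdec := hg.2 (b*(3*k-3)+p) (b'*(3*k-3)+q) hpos.1 (by omega) hpos'.2 heq
    have hinc := cross_lt k n S hk hU b b' p q hb hb' hbb hp1 hp2 hq1 hq2
    omega
  have hcross2 : ∀ b b' p q, b < n/(3*k-3) → b' < n/(3*k-3) → b ≠ b' →
      1 ≤ p → p ≤ 3*k-3 → 1 ≤ q → q ≤ 3*k-3 →
      g (b*(3*k-3)+p) ≠ g (b'*(3*k-3)+q) := by
    intro b b' p q hb hb' hbb hp1 hp2 hq1 hq2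
    rcases Nat.lt_or_ge b b' with h | h
    · exact hcross b b' p q hb hb' h hp1 hp2 hq1 hq2
    · intro heq
      exact hcross b' b q p hb' hb (by omega) hq1 hq2 hp1 hp2 heq.symm
  have hcardeq : ∀ b, b < n/(3*k-3) →
      ((Finset.Icc 1 (3*k-3)).image (fun r => g (b*(3*k-3)+r))).card = k := by
    have hdisj : ∀ x ∈ Finset.range (n/(3*k-3)), ∀ y ∈ Finset.range (n/(3*k-3)), x ≠ y →
        Disjoint ((Finset.Icc 1 (3*k-3)).image (fun r => g (x*(3*k-3)+r)))
          ((Finset.Icc 1 (3*k-3)).image (fun r => g (y*(3*k-3)+r))) := by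
      intro x hx y hy hxy
      rw [Finset.disjoint_left]
      intro a hax hay
      obtain ⟨r, hr, hra⟩ := Finset.mem_image.mp hax
      obtain ⟨r', hr', hra'⟩ := Finset.mem_image.mp hay
      rw [Finset.mem_Icc] at hr hr'
      rw [Finset.mem_range] at hx hy
      exact hcross2 x y r r' hx hy hxy hr.1 hr.2 hr'.1 hr'.2 (by rw [hra, hra'])
    have hge : ∀ b, b < n/(3*k-3) →
        k ≤ ((Finset.Icc 1 (3*k-3)).image (fun r => g (b*(3*k-3)+r))).card := by
      intro b hb
      obtain ⟨hfV, hGP⟩ := hF b hb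
      have hinj : Set.InjOn (fun r => g (b*(3*k-3)+r)) (Finset.Icc 1 k) := by
        intro r hr r' hr' hrr
        simp only [Finset.coe_Icc, Set.mem_Icc] at hr hr'
        by_contra hne
        have key : ∀ a a', 1 ≤ a → a < a' → a' ≤ k →
            g (b*(3*k-3)+a) ≠ g (b*(3*k-3)+a') := by
          intro a a' h1 h2 h3 heq
          have hpos := pos_range k n b a hk hdvd hb (by omega) (by omega)
          have hpos' := pos_range k n b a' hk hdvd hb (by omega) (by omega)
          have hdec := hg.2 _ _ hpos.1 (by omega) hpos'.2 heq
          have hTlt : shiftBlock k b S a < shiftBlock k b S a' :=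
            hGP.2.2 a a' (by omega) (by omega) (by omega) (by omega)
              (by rw [partOf_front k (F b) a (by omega), partOf_front k (F b) a' h3]; omega)
          have hv := value_eq k b S hGP.1 a (by omega) (by omega)
          have hv' := value_eq k b S hGP.1 a' (by omega) (by omega)
          omega
        rcases Nat.lt_trichotomy r r' with h | h | h
        · exact key r r' hr.1 h hr'.2 hrr
        · exact hne h
        · exact key r' r hr'.1 h hr.2 hrr.symm
      have hsubs : (Finset.Icc 1 k).image (fun r => g (b*(3*k-3)+r)) ⊆
          (Finset.Icc 1 (3*k-3)).image (fun r => g (b*(3*k-3)+r)) :=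
        Finset.image_subset_image (Finset.Icc_subset_Icc le_rfl (by omega))
      have hc : ((Finset.Icc 1 k).image (fun r => g (b*(3*k-3)+r))).card = k := by
        rw [Finset.card_image_of_injOn hinj, Nat.card_Icc]; omega
      calc k = ((Finset.Icc 1 k).image (fun r => g (b*(3*k-3)+r))).card := hc.symm
        _ ≤ _ := Finset.card_le_card hsubs
    intro b hb
    by_contra hne
    have hlt : k < ((Finset.Icc 1 (3*k-3)).image (fun r => g (b*(3*k-3)+r))).card :=
      lt_of_le_of_ne (hge b hb) (fun h => hne h.symm)
    have hslt : ∑ _x ∈ Finset.range (n/(3*k-3)), k <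
        ∑ x ∈ Finset.range (n/(3*k-3)),
          ((Finset.Icc 1 (3*k-3)).image (fun r => g (x*(3*k-3)+r))).card := by
      apply Finset.sum_lt_sum
      · intro i hi
        exact hge i (Finset.mem_range.mp hi)
      · exact ⟨b, Finset.mem_range.mpr hb, hlt⟩
    rw [Finset.sum_const, Finset.card_range, smul_eq_mul] at hslt
    have h1 : ∑ x ∈ Finset.range (n/(3*k-3)),
        ((Finset.Icc 1 (3*k-3)).image (fun r => g (x*(3*k-3)+r))).card =
        ((Finset.range (n/(3*k-3))).biUnion
          (fun x => (Finset.Icc 1 (3*k-3)).image (fun r => g (x*(3*k-3)+r)))).card :=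
      (Finset.card_biUnion hdisj).symm
    have h2 : ((Finset.range (n/(3*k-3))).biUnion
        (fun x => (Finset.Icc 1 (3*k-3)).image (fun r => g (x*(3*k-3)+r)))).card ≤
        (Finset.Icc 1 (k*n/(3*k-3))).card := by
      apply Finset.card_le_card
      intro a ha
      obtain ⟨x, hx, hax⟩ := Finset.mem_biUnion.mp ha
      obtain ⟨r, hr, hra⟩ := Finset.mem_image.mp hax
      rw [Finset.mem_Icc] at hr
      rw [Finset.mem_range] at hx
      have hpos := pos_range k n x r hk hdvd hx hr.1 hr.2
      have := hg.1 (x*(3*k-3)+r) hpos.1 hpos.2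
      rw [Finset.mem_Icc, ← hra]
      exact this
    rw [Nat.card_Icc] at h2
    have hD : k*n/(3*k-3) = k*(n/(3*k-3)) := Nat.mul_div_assoc k hdvd
    have hcomm : k*(n/(3*k-3)) = (n/(3*k-3))*k := Nat.mul_comm _ _
    omega
  constructor
  · intro b p q hb hp1 hp2 hq1 hq2
    obtain ⟨hfV, hGP⟩ := hF b hb
    have hg' : ∀ p q, 1 ≤ p → p < q → q ≤ 3*k-3 →
        g (b*(3*k-3)+p) = g (b*(3*k-3)+q) →
        shiftBlock k b S q < shiftBlock k b S p := by
      intro p q h1 h2 h3 heq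
      have hpos := pos_range k n b p hk hdvd hb (by omega) (by omega)
      have hpos' := pos_range k n b q hk hdvd hb (by omega) (by omega)
      have hdec := hg.2 _ _ hpos.1 (by omega) hpos'.2 heq
      have hv := value_eq k b S hGP.1 p (by omega) (by omega)
      have hv' := value_eq k b S hGP.1 q (by omega) (by omega)
      omega
    exact block_rel k hk (F b) (shiftBlock k b S) (fun r => g (b*(3*k-3)+r))
      hfV hGP hg' (le_of_eq (hcardeq b hb)) p q hp1 hp2 hq1 hq2
  · exact hcross2

/-- Every permutation `S ∈ U` can be partitioned into `k n / (3k-3)` strictly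
decreasing subsequences in exactly one way; moreover, two distinct permutations from
`U` have distinct such partitions of `{1, ..., n}`. -/
theorem stmt16 (k n : ℕ) (hk : 4 ≤ k) (hdvd : (3 * k - 3) ∣ n)
    (S : ℕ → ℕ) (hU : InU k n S) :
    (∃ g : ℕ → ℕ, IsDecPartitionN n (k * n / (3 * k - 3)) S g) ∧
    (∀ g g' : ℕ → ℕ, IsDecPartitionN n (k * n / (3 * k - 3)) S g →
      IsDecPartitionN n (k * n / (3 * k - 3)) S g' →
      ∀ p q, 1 ≤ p → p ≤ n → 1 ≤ q → q ≤ n → (g p = g q ↔ g' p = g' q)) ∧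
    (∀ (S' g g' : ℕ → ℕ), InU k n S' →
      IsDecPartitionN n (k * n / (3 * k - 3)) S g →
      IsDecPartitionN n (k * n / (3 * k - 3)) S' g' →
      (∀ p q, 1 ≤ p → p ≤ n → 1 ≤ q → q ≤ n → (g p = g q ↔ g' p = g' q)) →
      ∀ p, S p = S' p) := by
  obtain ⟨F, hF⟩ : ∃ F : ℕ → ℕ → ℕ, ∀ b, b < n / (3*k-3) →
      GammaValid (3*k-3) k (F b) ∧ IsGammaPerm (3*k-3) k (F b) (shiftBlock k b S) := by
    choose Fd hFd using hU.2
    exact ⟨fun b => if h : b < n/(3*k-3) then Fd b h else (fun _ => 1),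
      fun b hb => by simp only [dif_pos hb]; exact hFd b hb⟩
  refine ⟨?_, ?_, ?_⟩
  · -- existence
    refine ⟨canonG k n F, ?_, ?_⟩
    · intro q h1 h2
      obtain ⟨b, p, hb, hp1, hp2, rfl⟩ := decomp k n q hk hdvd h1 h2
      rw [canonG_eq k n b p F hk hdvd hb hp1 hp2]
      have hP := partOf_le k hk (F b) (hF b hb).1 p hp1 hp2
      have hD : k*n/(3*k-3) = k*(n/(3*k-3)) := Nat.mul_div_assoc k hdvd
      have hml : b*k + k ≤ (n/(3*k-3))*k := mul_lt_helper hb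
      have hcomm : k*(n/(3*k-3)) = (n/(3*k-3))*k := Nat.mul_comm _ _
      omega
    · intro p q h1 h2 h3 heq
      obtain ⟨b1, p1, hb1, hp11, hp12, rfl⟩ := decomp k n p hk hdvd h1 (by omega)
      obtain ⟨b2, q1, hb2, hq11, hq12, rfl⟩ := decomp k n q hk hdvd (by omega) h3
      rw [canonG_eq k n b1 p1 F hk hdvd hb1 hp11 hp12,
          canonG_eq k n b2 q1 F hk hdvd hb2 hq11 hq12] at heq
      have hP1 := partOf_le k hk (F b1) (hF b1 hb1).1 p1 hp11 hp12
      have hP2 := partOf_le k hk (F b2) (hF b2 hb2).1 q1 hq11 hq12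
      have hbb : b1 = b2 := by
        rcases Nat.lt_trichotomy b1 b2 with h | h | h
        · exfalso; have := mul_lt_helper (c := k) h; omega
        · exact h
        · exfalso; have := mul_lt_helper (c := k) h; omega
      subst hbb
      have hpe : partOf (3*k-3) k (F b1) p1 = partOf (3*k-3) k (F b1) q1 := by omega
      have hpq : p1 < q1 := by omega
      have hGP := (hF b1 hb1).2
      have hT := hGP.2.1 p1 q1 hp11 hpq hq12 hpe
      have hv := value_eq k b1 S hGP.1 p1 hp11 hp12
      have hv' := value_eq k b1 S hGP.1 q1 hq11 hq12
      omega
  · -- uniqueness of the partition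
    intro g g' hg hg' p q hp1 hp2 hq1 hq2
    obtain ⟨b1, p1, hb1, hp11, hp12, rfl⟩ := decomp k n p hk hdvd hp1 hp2
    obtain ⟨b2, q1, hb2, hq11, hq12, rfl⟩ := decomp k n q hk hdvd hq1 hq2
    have hR := main_rel k n hk hdvd S hU F hF g hg
    have hR' := main_rel k n hk hdvd S hU F hF g' hg'
    by_cases hbb : b1 = b2
    · subst hbb
      rw [hR.1 b1 p1 q1 hb1 hp11 hp12 hq11 hq12, hR'.1 b1 p1 q1 hb1 hp11 hp12 hq11 hq12]
    · exact iff_of_false (hR.2 b1 b2 p1 q1 hb1 hb2 hbb hp11 hp12 hq11 hq12)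
        (hR'.2 b1 b2 p1 q1 hb1 hb2 hbb hp11 hp12 hq11 hq12)
  · -- rigidity
    intro S' g g' hU' hg hg' hrel
    obtain ⟨F', hF'⟩ : ∃ F' : ℕ → ℕ → ℕ, ∀ b, b < n / (3*k-3) →
        GammaValid (3*k-3) k (F' b) ∧ IsGammaPerm (3*k-3) k (F' b) (shiftBlock k b S') := by
      choose Fd hFd using hU'.2
      exact ⟨fun b => if h : b < n/(3*k-3) then Fd b h else (fun _ => 1),
        fun b hb => by simp only [dif_pos hb]; exact hFd b hb⟩
    have hR := main_rel k n hk hdvd S hU F hF g hg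
    have hR' := main_rel k n hk hdvd S' hU' F' hF' g' hg'
    have hSS : ∀ b, b < n/(3*k-3) → ∀ p, shiftBlock k b S p = shiftBlock k b S' p := by
      intro b hb
      have hGP := (hF b hb).2
      have hGP' := (hF' b hb).2
      have hfeq : ∀ p, k+1 ≤ p → p ≤ 2*k-3 → F' b p = F b p := by
        intro p h1 h2
        have hfb := ((hF b hb).1) p (by omega) (by omega)
        have hmid1 : partOf (3*k-3) k (F b) p = F b p := partOf_mid k hk (F b) p h1 h2
        have hfrt1 : partOf (3*k-3) k (F b) (F b p) = F b p :=
          partOf_front k (F b) (F b p) hfb.2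
        have hgrel : g (b*(3*k-3)+p) = g (b*(3*k-3)+ F b p) :=
          (hR.1 b p (F b p) hb (by omega) (by omega) (by omega) (by omega)).mpr
            (by rw [hmid1, hfrt1])
        have hpos := pos_range k n b p hk hdvd hb (by omega) (by omega)
        have hpos' := pos_range k n b (F b p) hk hdvd hb (by omega) (by omega)
        have hgrel' : g' (b*(3*k-3)+p) = g' (b*(3*k-3)+ F b p) :=
          (hrel _ _ hpos.1 hpos.2 hpos'.1 hpos'.2).mp hgrel
        have hiff := (hR'.1 b p (F b p) hb (by omega) (by omega) (by omega) (by omega)).mp hgrel'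
        rw [partOf_mid k hk (F' b) p h1 h2, partOf_front k (F' b) (F b p) hfb.2] at hiff
        exact hiff
      have hpeq : ∀ p, partOf (3*k-3) k (F' b) p = partOf (3*k-3) k (F b) p := by
        intro p
        unfold partOf
        split_ifs with h1 h2
        · rfl
        · rfl
        · exact hfeq p (by omega) (by omega)
      have hGP2 : IsGammaPerm (3*k-3) k (F b) (shiftBlock k b S') := by
        refine ⟨hGP'.1, ?_, ?_⟩
        · intro p q h1 h2 h3 hpe
          apply hGP'.2.1 p q h1 h2 h3
          rw [hpeq p, hpeq q]; exact hpe
        · intro p q h1 h2 h3 h4 hlt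
          apply hGP'.2.2 p q h1 h2 h3 h4
          rw [hpeq p, hpeq q]; exact hlt
      exact gamma_unique (3*k-3) k (F b) _ _ hGP hGP2
    intro p
    by_cases hp : 1 ≤ p ∧ p ≤ n
    · obtain ⟨b, p1, hb, hp1, hp2, rfl⟩ := decomp k n p hk hdvd hp.1 hp.2
      have hv := value_eq k b S (hF b hb).2.1 p1 hp1 hp2
      have hv' := value_eq k b S' (hF' b hb).2.1 p1 hp1 hp2
      rw [hv, hv', hSS b hb p1]
    · rw [hU.1.2.2 p hp, hU'.1.2.2 p hp]


end Gamma
end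

section
/- Let k ≥ 4, let n be divisible by 3k−3, and let ⪯ be a partial order on the position set {1,…,n} such that every permutation of {1,…,n} that is consistent with ⪯ has the same length of a longest k-rollercoaster. Then at most one permutation from U is consistent with ⪯. -/
namespace Gamma

/-- The contiguous slice `A p, ..., A q` is strictly increasing. -/
def IncrSliceN (A : ℕ → ℕ) (p q : ℕ) : Prop :=
  ∀ t, p ≤ t → t < q → A t < A (t + 1)

/-- The contiguous slice `A p, ..., A q` is strictly decreasing. -/
def DecrSliceN (A : ℕ → ℕ) (p q : ℕ) : Prop :=
  ∀ t, p ≤ t → t < q → A (t + 1) < A t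

/-- The contiguous slice `A p, ..., A q` is strictly monotone. -/
def MonoSliceN (A : ℕ → ℕ) (p q : ℕ) : Prop :=
  IncrSliceN A p q ∨ DecrSliceN A p q

/-- `[p, q]` is a run of the length-`m` sequence `A 0, ..., A (m-1)`. -/
def IsRunN (m : ℕ) (A : ℕ → ℕ) (p q : ℕ) : Prop :=
  p ≤ q ∧ q < m ∧ MonoSliceN A p q ∧
    (p = 0 ∨ ¬ MonoSliceN A (p - 1) q) ∧ (q + 1 = m ∨ ¬ MonoSliceN A p (q + 1))

/-- Every run of the length-`m` sequence `A 0, ..., A (m-1)` has length at least `k`. -/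
def IsRollercoasterN (k m : ℕ) (A : ℕ → ℕ) : Prop :=
  ∀ p q, IsRunN m A p q → k ≤ q + 1 - p

/-- Length of a longest `k`-rollercoaster that is a subsequence of
`S 1, S 2, ..., S n` (positions `1, ..., n`). -/
noncomputable def maxRCnat (k n : ℕ) (S : ℕ → ℕ) : ℕ :=
  sSup {m | ∃ idx : ℕ → ℕ,
    ((∀ t, t < m → 1 ≤ idx t ∧ idx t < n + 1) ∧ ∀ s t, s < t → t < m → idx s < idx t) ∧
    IsRollercoasterN k m (fun t => S (idx t))}

/-- The permutation `P` of `{1, ..., n}` is consistent with the partial order `R`: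
`p ⪯ q` implies `P p ≤ P q`. -/
def Consistent (n : ℕ) (R : ℕ → ℕ → Prop) (P : ℕ → ℕ) : Prop :=
  ∀ p q, 1 ≤ p → p ≤ n → 1 ≤ q → q ≤ n → R p q → P p ≤ P q

open scoped Classical in
noncomputable def rk (N : ℕ) (lt : ℕ → ℕ → Prop) (v : ℕ) : ℕ :=
  ((Finset.Icc 1 N).filter (fun u => u = v ∨ lt u v)).card

section Aux
open scoped Classical

lemma mono_of_adj {g : ℕ → ℕ} {m : ℕ} (h : ∀ t, t + 1 < m → g t < g (t + 1)) :
    ∀ s t, s < t → t < m → g s < g t := by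
  intro s t hst htm
  induction t with
  | zero => omega
  | succ t ih =>
    rcases Nat.lt_succ_iff_lt_or_eq.mp hst with h' | h'
    · exact (ih h' (by omega)).trans (h t (by omega))
    · subst h'; exact h s (by omega)

lemma anti_of_adj {g : ℕ → ℕ} {m : ℕ} (h : ∀ t, t + 1 < m → g (t + 1) ≤ g t) :
    ∀ s t, s ≤ t → t < m → g t ≤ g s := by
  intro s t hst htm
  induction t with
  | zero =>
    have : s = 0 := by omega
    simp [this]
  | succ t ih =>
    rcases Nat.lt_succ_iff_lt_or_eq.mp (Nat.lt_succ_of_le hst) with h' | h'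
    · exact le_trans (h t (by omega)) (ih (by omega) (by omega))
    · subst h'; rfl

lemma rk_pos {N : ℕ} {lt : ℕ → ℕ → Prop} {v : ℕ} (h1 : 1 ≤ v) (h2 : v ≤ N) :
    1 ≤ rk N lt v := by
  apply Finset.card_pos.mpr
  exact ⟨v, Finset.mem_filter.mpr ⟨Finset.mem_Icc.mpr ⟨h1, h2⟩, Or.inl rfl⟩⟩

lemma rk_le {N : ℕ} {lt : ℕ → ℕ → Prop} (v : ℕ) : rk N lt v ≤ N := by
  calc rk N lt v ≤ (Finset.Icc 1 N).card := Finset.card_filter_le _ _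
  _ = N := by rw [Nat.card_Icc]; omega

lemma rk_lt {N : ℕ} {lt : ℕ → ℕ → Prop} {u v : ℕ}
    (htr : ∀ a b c, 1 ≤ a → a ≤ N → lt a b → lt b c → lt a c)
    (h1 : lt u v) (h2 : ¬ lt v u) (h3 : u ≠ v)
    (hu1 : 1 ≤ u) (hu2 : u ≤ N) (hv1 : 1 ≤ v) (hv2 : v ≤ N) :
    rk N lt u < rk N lt v := by
  apply Finset.card_lt_card
  constructor
  · intro w hw
    rw [Finset.mem_filter] at hw ⊢
    refine ⟨hw.1, ?_⟩
    rcases hw.2 with h | h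
    · subst h; exact Or.inr h1
    · exact Or.inr (htr w u v (Finset.mem_Icc.mp hw.1).1 (Finset.mem_Icc.mp hw.1).2 h h1)
  · intro hsub
    have := hsub (Finset.mem_filter.mpr ⟨Finset.mem_Icc.mpr ⟨hv1, hv2⟩, Or.inl rfl⟩)
    rw [Finset.mem_filter] at this
    rcases this.2 with h | h
    · exact h3 h.symm
    · exact h2 h

lemma dm {K : ℕ} (q r : ℕ) (h : r < K) : (q * K + r) / K = q ∧ (q * K + r) % K = r := by
  rw [mul_comm q K]
  constructor
  · rw [Nat.mul_add_div (by omega : 0 < K), Nat.div_eq_of_lt h]; omega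
  · rw [Nat.mul_add_mod, Nat.mod_eq_of_lt h]

end Aux
section Aux2
open scoped Classical
variable {k : ℕ}

lemma pf_head {f : ℕ → ℕ} {p : ℕ} (h2 : p ≤ k) : partOf (3*k-3) k f p = p := by
  simp only [partOf]; rw [if_pos h2]

lemma pf_tail (hk : 4 ≤ k) {f : ℕ → ℕ} {p : ℕ} (h1 : 2*k-2 ≤ p) :
    partOf (3*k-3) k f p = p - (2*k-3) := by
  simp only [partOf]; rw [if_neg (by omega), if_pos (by omega)]
  omega

lemma pf_mid (hk : 4 ≤ k) {f : ℕ → ℕ} {p : ℕ} (h1 : k+1 ≤ p) (h2 : p ≤ 2*k-3) :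
    partOf (3*k-3) k f p = f p := by
  simp only [partOf]; rw [if_neg (by omega), if_neg (by omega)]

lemma pf_mem (hk : 4 ≤ k) {f : ℕ → ℕ} (hf : GammaValid (3*k-3) k f) {p : ℕ}
    (h1 : 1 ≤ p) (h2 : p ≤ 3*k-3) :
    1 ≤ partOf (3*k-3) k f p ∧ partOf (3*k-3) k f p ≤ k := by
  rcases le_or_gt p k with h | h
  · rw [pf_head h]; omega
  · rcases le_or_gt (2*k-2) p with h' | h'
    · rw [pf_tail hk h']; omega
    · rw [pf_mid hk (by omega) (by omega)]
      exact hf p (by omega) (by omega)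

/-- positions increasing, values increasing forces strictly increasing parts -/
lemma part_lt_of_incr {f G : ℕ → ℕ} (hG : IsGammaPerm (3*k-3) k f G) (hk : 4 ≤ k) {u v : ℕ} (hu : 1 ≤ u) (huv : u < v) (hv : v ≤ 3*k-3)
    (hval : G u < G v) : partOf (3*k-3) k f u < partOf (3*k-3) k f v := by
  rcases lt_trichotomy (partOf (3*k-3) k f u) (partOf (3*k-3) k f v) with h | h | h
  · exact h
  · exact absurd (hG.2.1 u v hu huv hv h) (by omega)
  · exact absurd (hG.2.2 v u (by omega) hv hu (by omega) h) (by omega)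

/-- positions increasing, values decreasing forces non-increasing parts -/
lemma part_ge_of_decr {f G : ℕ → ℕ} (hG : IsGammaPerm (3*k-3) k f G) {u v : ℕ} (hu : 1 ≤ u) (huv : u < v) (hv : v ≤ 3*k-3)
    (hval : G v < G u) : partOf (3*k-3) k f v ≤ partOf (3*k-3) k f u := by
  by_contra h
  exact absurd (hG.2.2 u v hu (by omega) (by omega) hv (by omega)) (by omega)

/-- an injective self-map of `{1,...,N}` is surjective -/
lemma perm_surj {N : ℕ} {P : ℕ → ℕ} (hP : IsPerm N P) {w : ℕ} (h1 : 1 ≤ w) (h2 : w ≤ N) :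
    ∃ u, 1 ≤ u ∧ u ≤ N ∧ P u = w := by
  have := Finset.surj_on_of_inj_on_of_card_le (s := Finset.Icc 1 N) (t := Finset.Icc 1 N)
    (f := fun a _ => P a)
    (fun a ha => by
      have := hP.1 a (Finset.mem_Icc.mp ha).1 (Finset.mem_Icc.mp ha).2
      exact Finset.mem_Icc.mpr this)
    (fun a₁ a₂ ha₁ ha₂ h => hP.2.1 a₁ a₂ (Finset.mem_Icc.mp ha₁).1 (Finset.mem_Icc.mp ha₁).2
      (Finset.mem_Icc.mp ha₂).1 (Finset.mem_Icc.mp ha₂).2 h)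
    le_rfl
  obtain ⟨u, hu, he⟩ := this w (Finset.mem_Icc.mpr ⟨h1, h2⟩)
  exact ⟨u, (Finset.mem_Icc.mp hu).1, (Finset.mem_Icc.mp hu).2, he.symm⟩

/-- two permutations of `{1,...,N}` inducing the same order are equal -/
lemma perm_eq_of_orderIso {N : ℕ} {P Q : ℕ → ℕ} (hP : IsPerm N P) (hQ : IsPerm N Q)
    (h : ∀ u v, 1 ≤ u → u ≤ N → 1 ≤ v → v ≤ N → (P u < P v ↔ Q u < Q v)) :
    ∀ v, P v = Q v := by
  have key : ∀ (P : ℕ → ℕ), IsPerm N P → ∀ v, 1 ≤ v → v ≤ N →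
      P v = ((Finset.Icc 1 N).filter (fun u => P u ≤ P v)).card := by
    intro P hP v hv1 hv2
    have : ((Finset.Icc 1 N).filter (fun u => P u ≤ P v)).card = (Finset.Icc 1 (P v)).card := by
      apply Finset.card_bij (fun a _ => P a)
      · intro a ha
        rw [Finset.mem_filter, Finset.mem_Icc] at ha
        exact Finset.mem_Icc.mpr ⟨(hP.1 a ha.1.1 ha.1.2).1, ha.2⟩
      · intro a₁ ha₁ a₂ ha₂ he
        rw [Finset.mem_filter, Finset.mem_Icc] at ha₁ ha₂
        exact hP.2.1 a₁ a₂ ha₁.1.1 ha₁.1.2 ha₂.1.1 ha₂.1.2 he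
      · intro w hw
        rw [Finset.mem_Icc] at hw
        obtain ⟨u, hu1, hu2, he⟩ := perm_surj hP hw.1 (le_trans hw.2 (hP.1 v hv1 hv2).2)
        exact ⟨u, Finset.mem_filter.mpr ⟨Finset.mem_Icc.mpr ⟨hu1, hu2⟩, by omega⟩, he⟩
    rw [this, Nat.card_Icc]; omega
  intro v
  rcases Classical.em (1 ≤ v ∧ v ≤ N) with hv | hv
  · rw [key P hP v hv.1 hv.2, key Q hQ v hv.1 hv.2]
    congr 1
    apply Finset.filter_congr
    intro u hu
    rw [Finset.mem_Icc] at hu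
    constructor
    · intro hle
      by_contra hgt
      push_neg at hgt
      exact absurd ((h v u hv.1 hv.2 hu.1 hu.2).mpr hgt) (by omega)
    · intro hle
      by_contra hgt
      push_neg at hgt
      exact absurd ((h v u hv.1 hv.2 hu.1 hu.2).mp hgt) (by omega)
  · rw [hP.2.2 v hv, hQ.2.2 v hv]

end Aux2
section Aux3
open scoped Classical

def TSet (k n : ℕ) (S : ℕ → ℕ) : Set ℕ :=
  {m | ∃ idx : ℕ → ℕ,
    ((∀ t, t < m → 1 ≤ idx t ∧ idx t < n + 1) ∧ ∀ s t, s < t → t < m → idx s < idx t) ∧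
    IsRollercoasterN k m (fun t => S (idx t))}

lemma maxRCnat_def (k n : ℕ) (S : ℕ → ℕ) : maxRCnat k n S = sSup (TSet k n S) := rfl

lemma zero_mem_TSet (k n : ℕ) (S : ℕ → ℕ) : 0 ∈ TSet k n S := by
  refine ⟨fun _ => 1, ⟨fun t ht => by omega, fun s t hst ht => by omega⟩, ?_⟩
  intro p q hrun
  exact absurd hrun.2.1 (by omega)

lemma TSet_le_n {k n : ℕ} {S : ℕ → ℕ} {m : ℕ} (hm : m ∈ TSet k n S) : m ≤ n := by
  obtain ⟨idx, ⟨hr, hmono⟩, _⟩ := hm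
  have : m = (Finset.range m).card := by rw [Finset.card_range]
  rw [this]
  have : (Finset.Icc 1 n).card = n := by rw [Nat.card_Icc]; omega
  rw [← this]
  apply Finset.card_le_card_of_injOn idx
  · intro t ht
    rw [Finset.mem_coe, Finset.mem_range] at ht
    exact Finset.mem_Icc.mpr ⟨(hr t ht).1, by have := (hr t ht).2; omega⟩
  · intro a ha b hb he
    rw [Finset.mem_coe, Finset.mem_range] at ha hb
    rcases lt_trichotomy a b with h | h | h
    · exact absurd he (by have := hmono a b h hb; omega)
    · exact h
    · exact absurd he (by have := hmono b a h ha; omega)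

lemma mul_step {a b N : ℕ} (h : a < b) : a * N + N ≤ b * N := by
  have h1 : (a+1) * N ≤ b * N := Nat.mul_le_mul_right N (by omega)
  have h2 : (a+1) * N = a*N + N := by ring
  omega

variable {k n : ℕ} {S : ℕ → ℕ}

lemma block_bounds (hSU : InU k n S) {b : ℕ}
    (hb : b < n / (3*k-3)) {q : ℕ} (h1 : 1 ≤ q) (h2 : q ≤ 3*k-3) :
    b*(3*k-3) + 1 ≤ S (b*(3*k-3) + q) ∧ S (b*(3*k-3) + q) ≤ b*(3*k-3) + (3*k-3) := by
  obtain ⟨f, hf, hG⟩ := hSU.2 b hb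
  have h := hG.1.1 q h1 h2
  simp only [shiftBlock] at h
  rw [if_pos ⟨h1, h2⟩] at h
  omega

lemma shiftBlock_eq {b q : ℕ} (h1 : 1 ≤ q) (h2 : q ≤ 3*k-3) :
    shiftBlock k b S q = S (b*(3*k-3) + q) - b*(3*k-3) := by
  simp only [shiftBlock]; rw [if_pos ⟨h1, h2⟩]

/-- block index facts for a position `x ∈ [1,n]` -/
lemma blockOf_facts (hk : 4 ≤ k) (hdvd : (3*k-3) ∣ n) {x : ℕ} (h1 : 1 ≤ x) (h2 : x ≤ n) :
    (x-1)/(3*k-3) < n/(3*k-3) ∧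
    ((x-1)/(3*k-3))*(3*k-3) + 1 ≤ x ∧ x ≤ ((x-1)/(3*k-3))*(3*k-3) + (3*k-3) := by
  set N := 3*k-3 with hN
  have hN0 : 0 < N := by omega
  have hd : ((x-1)/N)*N + (x-1) % N = x - 1 := by
    rw [mul_comm]; exact Nat.div_add_mod _ _
  have hm : (x-1) % N < N := Nat.mod_lt _ hN0
  have hn : (n/N)*N = n := Nat.div_mul_cancel hdvd
  constructor
  · by_contra hc
    push_neg at hc
    have := Nat.mul_le_mul_right N hc
    omega
  · omega

lemma S_block_val (hk : 4 ≤ k) (hdvd : (3*k-3) ∣ n) (hSU : InU k n S) {x : ℕ}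
    (h1 : 1 ≤ x) (h2 : x ≤ n) :
    ((x-1)/(3*k-3))*(3*k-3) + 1 ≤ S x ∧ S x ≤ ((x-1)/(3*k-3))*(3*k-3) + (3*k-3) := by
  obtain ⟨hb, hx1, hx2⟩ := blockOf_facts hk hdvd h1 h2
  have := block_bounds hSU hb (q := x - ((x-1)/(3*k-3))*(3*k-3)) (by omega) (by omega)
  have he : ((x-1)/(3*k-3))*(3*k-3) + (x - ((x-1)/(3*k-3))*(3*k-3)) = x := by omega
  rw [he] at this
  exact this

end Aux3
section Aux4
open scoped Classical
variable {k n : ℕ} {S : ℕ → ℕ}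

lemma local_no_dec (hk : 4 ≤ k) {f G : ℕ → ℕ} (hf : GammaValid (3*k-3) k f)
    (hG : IsGammaPerm (3*k-3) k f G) (c : ℕ → ℕ)
    (hcr : ∀ t, t < k → 1 ≤ c t ∧ c t ≤ 3*k-3)
    (hcm : ∀ t, t+1 < k → c t < c (t+1))
    (hcd : ∀ t, t+1 < k → G (c (t+1)) < G (c t)) : False := by
  have hπadj : ∀ t, t+1 < k → partOf (3*k-3) k f (c (t+1)) ≤ partOf (3*k-3) k f (c t) := by
    intro t ht
    exact part_ge_of_decr hG (hcr t (by omega)).1 (hcm t ht) (hcr (t+1) ht).2 (hcd t ht)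
  have hπ : ∀ s t, s ≤ t → t < k → partOf (3*k-3) k f (c t) ≤ partOf (3*k-3) k f (c s) :=
    anti_of_adj hπadj
  have hcmono : ∀ s t, s < t → t < k → c s < c t := mono_of_adj hcm
  set A := (Finset.range k).filter (fun t => c t ≤ k) with hA
  set Bm := (Finset.range k).filter (fun t => k+1 ≤ c t ∧ c t ≤ 2*k-3) with hBm
  set C := (Finset.range k).filter (fun t => 2*k-2 ≤ c t) with hC
  have haux : ∀ a b, a < b → b < k → c a ≤ k → c b ≤ k → False := by
    intro a b hab hb h1 h2
    have h3 := hcmono a b hab hb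
    have e1 : partOf (3*k-3) k f (c a) = c a := pf_head h1
    have e2 : partOf (3*k-3) k f (c b) = c b := pf_head h2
    have := hπ a b (by omega) hb
    omega
  have hAcard : A.card ≤ 1 := by
    apply Finset.card_le_one.mpr
    intro a ha b hb
    rw [hA, Finset.mem_filter, Finset.mem_range] at ha hb
    rcases lt_trichotomy a b with h | h | h
    · exact absurd (haux a b h hb.1 ha.2 hb.2) (by simp)
    · exact h
    · exact absurd (haux b a h ha.1 hb.2 ha.2) (by simp)
  have haux' : ∀ a b, a < b → b < k → 2*k-2 ≤ c a → 2*k-2 ≤ c b → False := by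
    intro a b hab hb h1 h2
    have h3 := hcmono a b hab hb
    have e1 : partOf (3*k-3) k f (c a) = c a - (2*k-3) := pf_tail hk h1
    have e2 : partOf (3*k-3) k f (c b) = c b - (2*k-3) := pf_tail hk h2
    have := hπ a b (by omega) hb
    omega
  have hCcard : C.card ≤ 1 := by
    apply Finset.card_le_one.mpr
    intro a ha b hb
    rw [hC, Finset.mem_filter, Finset.mem_range] at ha hb
    rcases lt_trichotomy a b with h | h | h
    · exact absurd (haux' a b h hb.1 ha.2 hb.2) (by simp)
    · exact h
    · exact absurd (haux' b a h ha.1 hb.2 ha.2) (by simp)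
  have hBcard : Bm.card ≤ k - 3 := by
    have : (Finset.Icc (k+1) (2*k-3)).card = k - 3 := by rw [Nat.card_Icc]; omega
    rw [← this]
    apply Finset.card_le_card_of_injOn c
    · intro t ht
      rw [hBm, Finset.mem_coe, Finset.mem_filter] at ht
      exact Finset.mem_Icc.mpr ht.2
    · intro a ha b hb he
      rw [Finset.mem_coe, hBm, Finset.mem_filter, Finset.mem_range] at ha hb
      rcases lt_trichotomy a b with h | h | h
      · exact absurd he (by have := hcmono a b h hb.1; omega)
      · exact h
      · exact absurd he (by have := hcmono b a h ha.1; omega)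
  have hsub : Finset.range k ⊆ A ∪ Bm ∪ C := by
    intro t ht
    rw [Finset.mem_range] at ht
    rw [Finset.mem_union, Finset.mem_union, hA, hBm, hC]
    simp only [Finset.mem_filter, Finset.mem_range]
    have := hcr t ht
    rcases le_or_gt (c t) k with h | h
    · exact Or.inl (Or.inl ⟨ht, h⟩)
    · rcases le_or_gt (2*k-2) (c t) with h' | h'
      · exact Or.inr ⟨ht, h'⟩
      · exact Or.inl (Or.inr ⟨ht, by omega, by omega⟩)
  have := Finset.card_le_card hsub
  have h2 := Finset.card_union_le (A ∪ Bm) C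
  have h3 := Finset.card_union_le A Bm
  rw [Finset.card_range] at this
  omega

lemma no_dec_chain (hk : 4 ≤ k) (hdvd : (3*k-3) ∣ n) (hSU : InU k n S) (c : ℕ → ℕ)
    (hcr : ∀ t, t < k → 1 ≤ c t ∧ c t ≤ n)
    (hcm : ∀ t, t+1 < k → c t < c (t+1))
    (hcd : ∀ t, t+1 < k → S (c (t+1)) < S (c t)) : False := by
  have hbadj : ∀ t, t+1 < k → (c (t+1) - 1)/(3*k-3) = (c t - 1)/(3*k-3) := by
    intro t ht
    have hle : (c t - 1)/(3*k-3) ≤ (c (t+1) - 1)/(3*k-3) :=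
      Nat.div_le_div_right (by have := hcm t ht; omega)
    rcases eq_or_lt_of_le hle with h | h
    · exact h.symm
    · exfalso
      have hv1 := S_block_val hk hdvd hSU (hcr t (by omega)).1 (hcr t (by omega)).2
      have hv2 := S_block_val hk hdvd hSU (hcr (t+1) ht).1 (hcr (t+1) ht).2
      have := mul_step (N := 3*k-3) h
      have := hcd t ht
      omega
  have hbconst : ∀ t, t < k → (c t - 1)/(3*k-3) = (c 0 - 1)/(3*k-3) := by
    intro t
    induction t with
    | zero => intro _; rfl
    | succ t ih => intro ht; rw [hbadj t ht]; exact ih (by omega)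
  set b := (c 0 - 1)/(3*k-3) with hb0
  have hb : b < n / (3*k-3) :=
    (blockOf_facts hk hdvd (hcr 0 (by omega)).1 (hcr 0 (by omega)).2).1
  obtain ⟨f, hf, hG⟩ := hSU.2 b hb
  have hpos : ∀ t, t < k → b*(3*k-3) + 1 ≤ c t ∧ c t ≤ b*(3*k-3) + (3*k-3) := by
    intro t ht
    have h1 := blockOf_facts hk hdvd (hcr t ht).1 (hcr t ht).2
    rw [hbconst t ht] at h1
    exact ⟨h1.2.1, h1.2.2⟩
  apply local_no_dec hk hf hG (fun t => c t - b*(3*k-3))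
  · intro t ht
    have := hpos t ht
    omega
  · intro t ht
    have := hpos t (by omega)
    have := hpos (t+1) ht
    have := hcm t ht
    omega
  · intro t ht
    have h1 := hpos t (by omega)
    have h2 := hpos (t+1) ht
    have e1 : shiftBlock k b S (c t - b*(3*k-3)) = S (c t) - b*(3*k-3) := by
      rw [shiftBlock_eq (by omega) (by omega)]
      congr 2
      omega
    have e2 : shiftBlock k b S (c (t+1) - b*(3*k-3)) = S (c (t+1)) - b*(3*k-3) := by
      rw [shiftBlock_eq (by omega) (by omega)]
      congr 2
      omega
    rw [e1, e2]
    have hv1 := S_block_val hk hdvd hSU (hcr t (by omega)).1 (hcr t (by omega)).2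
    have hv2 := S_block_val hk hdvd hSU (hcr (t+1) (by omega)).1 (hcr (t+1) (by omega)).2
    rw [hbconst t (by omega)] at hv1
    rw [hbconst (t+1) (by omega)] at hv2
    have := hcd t ht
    omega

end Aux4
section Aux5
open scoped Classical
variable {k n : ℕ} {S : ℕ → ℕ}

lemma incr_le (hk : 4 ≤ k) (hdvd : (3*k-3) ∣ n) (hSU : InU k n S) {m : ℕ} (idx : ℕ → ℕ)
    (hr : ∀ t, t < m → 1 ≤ idx t ∧ idx t ≤ n)
    (hmono : ∀ t, t+1 < m → idx t < idx (t+1))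
    (hv : ∀ t, t+1 < m → S (idx t) < S (idx (t+1))) :
    m ≤ k * (n / (3*k-3)) := by
  choose! F hF using hSU.2
  obtain ⟨bt, hbt⟩ : ∃ bt : ℕ → ℕ, ∀ t, bt t = (idx t - 1)/(3*k-3) := ⟨_, fun _ => rfl⟩
  obtain ⟨pt, hpt⟩ : ∃ pt : ℕ → ℕ,
      ∀ t, pt t = partOf (3*k-3) k (F (bt t)) (idx t - bt t * (3*k-3)) := ⟨_, fun _ => rfl⟩
  have hbfacts : ∀ t, t < m → bt t < n/(3*k-3) ∧
      bt t * (3*k-3) + 1 ≤ idx t ∧ idx t ≤ bt t * (3*k-3) + (3*k-3) := by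
    intro t ht
    rw [hbt]
    exact blockOf_facts hk hdvd (hr t ht).1 (hr t ht).2
  have hpfacts : ∀ t, t < m → 1 ≤ pt t ∧ pt t ≤ k := by
    intro t ht
    have h1 := hbfacts t ht
    rw [hpt]
    exact pf_mem hk (hF (bt t) h1.1).1 (by omega) (by omega)
  have hkeyadj : ∀ t, t + 1 < m →
      bt t * (k+1) + pt t < bt (t+1) * (k+1) + pt (t+1) := by
    intro t ht
    have hb1 := hbfacts t (by omega)
    have hb2 := hbfacts (t+1) ht
    have hp1 := hpfacts t (by omega)
    have hp2 := hpfacts (t+1) ht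
    have hle : bt t ≤ bt (t+1) := by
      rw [hbt, hbt]
      exact Nat.div_le_div_right (by have := hmono t ht; omega)
    rcases eq_or_lt_of_le hle with h | h
    · -- same block
      have hgp := (hF (bt t) hb1.1).2
      have hvm := hv t ht
      have hmm := hmono t ht
      have hv1 := S_block_val hk hdvd hSU (hr t (by omega)).1 (hr t (by omega)).2
      have hv2 := S_block_val hk hdvd hSU (hr (t+1) ht).1 (hr (t+1) ht).2
      rw [← hbt] at hv1 hv2
      rw [← h] at hb2
      have e1 : shiftBlock k (bt t) S (idx t - bt t * (3*k-3))
          = S (idx t) - bt t * (3*k-3) := by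
        rw [shiftBlock_eq (by omega) (by omega)]; congr 2; omega
      have e2 : shiftBlock k (bt t) S (idx (t+1) - bt t * (3*k-3))
          = S (idx (t+1)) - bt t * (3*k-3) := by
        rw [shiftBlock_eq (by omega) (by omega)]; congr 2; omega
      have hlt : pt t < pt (t+1) := by
        rw [hpt, hpt, ← h]
        exact part_lt_of_incr hgp hk (u := idx t - bt t * (3*k-3))
          (v := idx (t+1) - bt t * (3*k-3)) (by omega) (by omega) (by omega)
          (by rw [e1, e2]; omega)
      rw [← h]
      omega
    · have := mul_step (N := k+1) h
      omega
  have hkey : ∀ s t, s < t → t < m →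
      bt s * (k+1) + pt s < bt t * (k+1) + pt t := mono_of_adj hkeyadj
  have hinj : Set.InjOn (fun t => (bt t, pt t)) (Finset.range m) := by
    intro a ha b hb he
    rw [Finset.coe_range, Set.mem_Iio] at ha hb
    simp only [Prod.mk.injEq] at he
    rcases lt_trichotomy a b with h | h | h
    · have := hkey a b h hb
      rw [he.1, he.2] at this
      exact absurd this (lt_irrefl _)
    · exact h
    · have := hkey b a h ha
      rw [he.1, he.2] at this
      exact absurd this (lt_irrefl _)
  have hcard := Finset.card_le_card_of_injOn (fun t => (bt t, pt t))
    (t := Finset.range (n/(3*k-3)) ×ˢ Finset.Icc 1 k) ?_ hinj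
  · rw [Finset.card_range, Finset.card_product, Finset.card_range, Nat.card_Icc] at hcard
    have hcomm : (n/(3*k-3)) * (k + 1 - 1) = k * (n/(3*k-3)) := by
      have : k + 1 - 1 = k := by omega
      rw [this, Nat.mul_comm]
    rw [hcomm] at hcard
    exact hcard
  · intro t ht
    rw [Finset.mem_coe, Finset.mem_range] at ht
    rw [Finset.mem_coe, Finset.mem_product, Finset.mem_range, Finset.mem_Icc]
    exact ⟨(hbfacts t ht).1, hpfacts t ht⟩

lemma maxRC_le_of_U (hk : 4 ≤ k) (hdvd : (3*k-3) ∣ n) (hSU : InU k n S) :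
    maxRCnat k n S ≤ k * (n / (3*k-3)) := by
  rw [maxRCnat_def]
  apply csSup_le ⟨0, zero_mem_TSet k n S⟩
  intro m hm
  obtain ⟨idx, ⟨hr, hmono⟩, hroll⟩ := hm
  have hr' : ∀ t, t < m → 1 ≤ idx t ∧ idx t ≤ n := by
    intro t ht; have := hr t ht; omega
  by_cases hdesc : ∃ t, t+1 < m ∧ S (idx (t+1)) < S (idx t)
  · exfalso
    obtain ⟨t, htm, hdt⟩ := hdesc
    set A := fun u => S (idx u) with hA
    have hdt' : A (t+1) < A t := hdt
    have hwit : DecrSliceN A t (t+1) := by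
      refine fun s h1 h2 => ?_
      have : s = t := by omega
      rw [this]; exact hdt'
    have hex : ∃ p', DecrSliceN A p' (t+1) := ⟨t, hwit⟩
    set p := Nat.find hex with hp
    have hps : DecrSliceN A p (t+1) := Nat.find_spec hex
    have hple : p ≤ t := Nat.find_min' hex hwit
    set q := Nat.findGreatest (fun q' => DecrSliceN A t q') (m-1) with hq
    have hq1 : DecrSliceN A t q :=
      Nat.findGreatest_spec (show t+1 ≤ m-1 by omega) hwit
    have hq2 : t+1 ≤ q := Nat.le_findGreatest (show t+1 ≤ m-1 by omega) hwit
    have hq3 : q ≤ m-1 := Nat.findGreatest_le _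
    have hdecr : DecrSliceN A p q := by
      intro s h1 h2
      rcases lt_or_ge s (t+1) with h | h
      · exact hps s h1 (by omega)
      · exact hq1 s (by omega) h2
    have hrun : IsRunN m A p q := by
      refine ⟨by omega, by omega, Or.inr hdecr, ?_, ?_⟩
      · rcases Nat.eq_zero_or_pos p with h0 | h0
        · exact Or.inl h0
        · refine Or.inr (fun hM => ?_)
          rcases hM with hI | hD
          · exact absurd (hI t (by omega) (by omega)) (by omega)
          · have hres : DecrSliceN A (p-1) (t+1) := fun s h1 h2 => hD s h1 (by omega)
            exact Nat.find_min hex (by omega : p - 1 < p) hres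
      · rcases Classical.em (q + 1 = m) with h0 | h0
        · exact Or.inl h0
        · refine Or.inr (fun hM => ?_)
          rcases hM with hI | hD
          · exact absurd (hI t (by omega) (by omega)) (by omega)
          · have hres : DecrSliceN A t (q+1) := fun s h1 h2 => hD s (by omega) h2
            exact Nat.findGreatest_is_greatest (by omega : q < q+1) (by omega) hres
    have hklen : k ≤ q + 1 - p := hroll p q hrun
    apply no_dec_chain hk hdvd hSU (fun s => idx (p + s))
    · intro s hs
      exact hr' (p+s) (by omega)
    · intro s hs
      exact hmono (p+s) (p+s+1) (by omega) (by omega)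
    · intro s hs
      have := hdecr (p+s) (by omega) (by omega)
      exact this
  · push_neg at hdesc
    apply incr_le hk hdvd hSU idx hr' (fun t ht => hmono t (t+1) (by omega) ht)
    intro t ht
    have h1 := hdesc t ht
    have hne : idx t ≠ idx (t+1) := by
      have := hmono t (t+1) (by omega) ht
      omega
    have : S (idx t) ≠ S (idx (t+1)) := by
      intro he
      exact hne (hSU.1.2.1 _ _ (hr' t (by omega)).1 (hr' t (by omega)).2
        (hr' (t+1) ht).1 (hr' (t+1) ht).2 he)
    omega

end Aux5
section Aux6
open scoped Classical
variable {k n : ℕ} {S : ℕ → ℕ}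

lemma dm_unique {K q r q' r' : ℕ} (h : r < K) (h' : r' < K) (he : q*K + r = q'*K + r') :
    q = q' ∧ r = r' := by
  have h1 := (dm q r h).1
  have h2 := (dm q' r' h').1
  have h3 := (dm q r h).2
  have h4 := (dm q' r' h').2
  rw [he] at h1 h3
  exact ⟨h1.symm.trans h2, h3.symm.trans h4⟩

lemma blockOf_eq (hk : 4 ≤ k) {x b : ℕ} (h1 : b*(3*k-3)+1 ≤ x) (h2 : x ≤ b*(3*k-3)+(3*k-3)) :
    (x-1)/(3*k-3) = b := by
  have he : x - 1 = b*(3*k-3) + (x-1-b*(3*k-3)) := by omega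
  rw [he]
  exact (dm b _ (by omega)).1

lemma roll_of_incr {k m : ℕ} {A : ℕ → ℕ} (hkm : k ≤ m)
    (hinc : ∀ t, t+1 < m → A t < A (t+1)) : IsRollercoasterN k m A := by
  intro p q hrun
  obtain ⟨hpq, hqm, hM, h4, h5⟩ := hrun
  have hp0 : p = 0 := by
    rcases h4 with h | h
    · exact h
    · exact absurd (Or.inl (fun s h1 h2 => hinc s (by omega))) h
  have hq : q + 1 = m := by
    by_contra hne
    rcases h5 with h | h
    · exact hne h
    · exact h (Or.inl (fun s h1 h2 => hinc s (by omega)))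
  omega

lemma le_maxRC {k n m : ℕ} {S : ℕ → ℕ} (hm : m ∈ TSet k n S) : m ≤ maxRCnat k n S := by
  rw [maxRCnat_def]
  exact le_csSup ⟨n, fun x hx => TSet_le_n hx⟩ hm

lemma head_incr (hk : 4 ≤ k) (hSU : InU k n S) {b' r r' : ℕ} (hb' : b' < n/(3*k-3))
    (h1 : 1 ≤ r) (h2 : r < r') (h3 : r' ≤ k) :
    S (b'*(3*k-3)+r) < S (b'*(3*k-3)+r') := by
  obtain ⟨g, hg, hGg⟩ := hSU.2 b' hb'
  have e1 := shiftBlock_eq (S := S) (k := k) (b := b') (q := r) h1 (by omega)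
  have e2 := shiftBlock_eq (S := S) (k := k) (b := b') (q := r') (by omega) (by omega)
  have hv1 := block_bounds hSU hb' (q := r) h1 (by omega)
  have hv2 := block_bounds hSU hb' (q := r') (by omega) (by omega)
  have hlt := hGg.2.2 r r' h1 (by omega) (by omega) (by omega) (by
    rw [pf_head (by omega), pf_head h3]
    exact h2)
  rw [e1, e2] at hlt
  omega

end Aux6
section Aux7
open scoped Classical
variable {k n : ℕ}

lemma contra_key (hk : 4 ≤ k) (hdvd : (3*k-3) ∣ n)
    {R : ℕ → ℕ → Prop} {S S' : ℕ → ℕ}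
    (hSU : InU k n S) (hSU' : InU k n S')
    (hcS : Consistent n R S) (hcS' : Consistent n R S')
    {b : ℕ} (hb : b < n / (3*k-3))
    {f f' : ℕ → ℕ}
    (hf : GammaValid (3*k-3) k f) (hGf : IsGammaPerm (3*k-3) k f (shiftBlock k b S))
    (hf' : GammaValid (3*k-3) k f') (hGf' : IsGammaPerm (3*k-3) k f' (shiftBlock k b S'))
    {p₀ : ℕ} (hp1 : k+1 ≤ p₀) (hp2 : p₀ ≤ 2*k-3) (hii : f p₀ < f' p₀) :
    ∃ P : ℕ → ℕ, IsPerm n P ∧ Consistent n R P ∧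
      k * (n / (3*k-3)) + 1 ≤ maxRCnat k n P := by
  have hi : 1 ≤ f p₀ ∧ f p₀ ≤ k := hf p₀ (by omega) (by omega)
  have hi' : 1 ≤ f' p₀ ∧ f' p₀ ≤ k := hf' p₀ (by omega) (by omega)
  have hik : f p₀ ≤ k - 1 := by omega
  have hn : (n/(3*k-3)) * (3*k-3) = n := Nat.div_mul_cancel hdvd
  have hbn : b*(3*k-3) + (3*k-3) ≤ n := by
    have := mul_step (N := 3*k-3) hb
    omega
  obtain ⟨lt, hltdef⟩ : ∃ ltH : ℕ → ℕ → Prop, ∀ u v, ltH u v ↔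
      (partOf (3*k-3) k f u < partOf (3*k-3) k f v ∨
        (partOf (3*k-3) k f u = partOf (3*k-3) k f v ∧
          ((partOf (3*k-3) k f u = f p₀ ∧ shiftBlock k b S' u < shiftBlock k b S' v) ∨
           (partOf (3*k-3) k f u ≠ f p₀ ∧ v < u)))) := ⟨_, fun _ _ => Iff.rfl⟩
  -- transitivity
  have htr : ∀ a c d, 1 ≤ a → a ≤ 3*k-3 → lt a c → lt c d → lt a d := by
    intro a c d _ _ h1 h2
    rw [hltdef] at h1 h2 ⊢
    rcases h1 with h1 | ⟨e1, h1⟩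
    · rcases h2 with h2 | ⟨e2, h2⟩
      · exact Or.inl (by omega)
      · exact Or.inl (by omega)
    · rcases h2 with h2 | ⟨e2, h2⟩
      · exact Or.inl (by omega)
      · refine Or.inr ⟨by omega, ?_⟩
        rcases h1 with ⟨hc1, hG1⟩ | ⟨hc1, hp1'⟩
        · rcases h2 with ⟨hc2, hG2⟩ | ⟨hc2, hp2'⟩
          · exact Or.inl ⟨hc1, by omega⟩
          · exact absurd (e1 ▸ hc1) hc2
        · rcases h2 with ⟨hc2, hG2⟩ | ⟨hc2, hp2'⟩
          · exact absurd (e1 ▸ hc2) (by omega)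
          · exact Or.inr ⟨hc1, by omega⟩
  have hasym : ∀ u v, lt u v → ¬ lt v u := by
    intro u v h1 h2
    rw [hltdef] at h1 h2
    rcases h1 with h1 | ⟨e1, h1⟩
    · rcases h2 with h2 | ⟨e2, h2⟩
      · omega
      · omega
    · rcases h2 with h2 | ⟨e2, h2⟩
      · omega
      · rcases h1 with ⟨hc1, hG1⟩ | ⟨hc1, hp1x⟩ <;>
          rcases h2 with ⟨hc2, hG2⟩ | ⟨hc2, hp2x⟩ <;> omega
  have hirr : ∀ u v, lt u v → u ≠ v := by
    intro u v h1 he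
    subst he
    rw [hltdef] at h1
    rcases h1 with h1 | ⟨e1, h1⟩
    · omega
    · rcases h1 with ⟨_, h⟩ | ⟨_, h⟩ <;> omega
  have htot : ∀ u v, 1 ≤ u → u ≤ 3*k-3 → 1 ≤ v → v ≤ 3*k-3 → u ≠ v → lt u v ∨ lt v u := by
    intro u v hu1 hu2 hv1 hv2 hne
    rcases lt_trichotomy (partOf (3*k-3) k f u) (partOf (3*k-3) k f v) with h | h | h
    · exact Or.inl ((hltdef u v).mpr (Or.inl h))
    · rcases Classical.em (partOf (3*k-3) k f u = f p₀) with hc | hc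
      · have hne' : shiftBlock k b S' u ≠ shiftBlock k b S' v := by
          intro he
          exact hne (hGf'.1.2.1 u v hu1 hu2 hv1 hv2 he)
        rcases lt_or_gt_of_ne hne' with h' | h'
        · exact Or.inl ((hltdef u v).mpr (Or.inr ⟨h, Or.inl ⟨hc, h'⟩⟩))
        · exact Or.inr ((hltdef v u).mpr (Or.inr ⟨h.symm, Or.inl ⟨h ▸ hc, h'⟩⟩))
      · rcases lt_or_gt_of_ne hne with h' | h'
        · exact Or.inr ((hltdef v u).mpr (Or.inr ⟨h.symm, Or.inr ⟨fun hh => hc (h ▸ hh), h'⟩⟩))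
        · exact Or.inl ((hltdef u v).mpr (Or.inr ⟨h, Or.inr ⟨hc, h'⟩⟩))
    · exact Or.inr ((hltdef v u).mpr (Or.inl h))
  have hHlt : ∀ u v, 1 ≤ u → u ≤ 3*k-3 → 1 ≤ v → v ≤ 3*k-3 → lt u v →
      rk (3*k-3) lt u < rk (3*k-3) lt v := by
    intro u v hu1 hu2 hv1 hv2 h
    exact rk_lt (fun a bb c ha1 ha2 => htr a bb c ha1 ha2) h (hasym u v h) (hirr u v h)
      hu1 hu2 hv1 hv2
  have hH1 : ∀ v, 1 ≤ v → v ≤ 3*k-3 → 1 ≤ rk (3*k-3) lt v ∧ rk (3*k-3) lt v ≤ 3*k-3 := by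
    intro v h1 h2
    exact ⟨rk_pos h1 h2, rk_le v⟩
  have hHinj : ∀ u v, 1 ≤ u → u ≤ 3*k-3 → 1 ≤ v → v ≤ 3*k-3 →
      rk (3*k-3) lt u = rk (3*k-3) lt v → u = v := by
    intro u v hu1 hu2 hv1 hv2 he
    by_contra hne
    rcases htot u v hu1 hu2 hv1 hv2 hne with h | h
    · exact absurd he (by have := hHlt u v hu1 hu2 hv1 hv2 h; omega)
    · exact absurd he (by have := hHlt v u hv1 hv2 hu1 hu2 h; omega)
  -- consistency of lt with the common order of S and S'
  have hcons : ∀ u v, 1 ≤ u → u ≤ 3*k-3 → 1 ≤ v → v ≤ 3*k-3 →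
      shiftBlock k b S u < shiftBlock k b S v →
      shiftBlock k b S' u < shiftBlock k b S' v → lt u v := by
    intro u v hu1 hu2 hv1 hv2 hG hG'
    rw [hltdef]
    rcases lt_trichotomy (partOf (3*k-3) k f u) (partOf (3*k-3) k f v) with h | h | h
    · exact Or.inl h
    · refine Or.inr ⟨h, ?_⟩
      rcases Classical.em (partOf (3*k-3) k f u = f p₀) with hc | hc
      · exact Or.inl ⟨hc, hG'⟩
      · refine Or.inr ⟨hc, ?_⟩
        rcases lt_trichotomy u v with h' | h' | h'
        · exact absurd (hGf.2.1 u v hu1 h' hv2 h) (by omega)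
        · exact absurd (h' ▸ hG) (lt_irrefl _)
        · exact h'
    · exact absurd (hGf.2.2 v u hv1 hv2 hu1 hu2 h) (by omega)
  -- the modified permutation P
  obtain ⟨P, hPdef⟩ : ∃ P : ℕ → ℕ, ∀ x, P x =
      if b*(3*k-3)+1 ≤ x ∧ x ≤ b*(3*k-3)+(3*k-3)
      then b*(3*k-3) + rk (3*k-3) lt (x - b*(3*k-3)) else S x := ⟨_, fun _ => rfl⟩
  have hPin : ∀ x, b*(3*k-3)+1 ≤ x → x ≤ b*(3*k-3)+(3*k-3) →
      P x = b*(3*k-3) + rk (3*k-3) lt (x - b*(3*k-3)) := by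
    intro x h1 h2
    rw [hPdef, if_pos ⟨h1, h2⟩]
  have hPout : ∀ x, (x ≤ b*(3*k-3) ∨ b*(3*k-3)+(3*k-3) < x) → P x = S x := by
    intro x h
    rw [hPdef, if_neg (by omega)]
  -- transfer from G to S values
  have hGS : ∀ u, 1 ≤ u → u ≤ 3*k-3 →
      shiftBlock k b S u = S (b*(3*k-3)+u) - b*(3*k-3) ∧
      b*(3*k-3)+1 ≤ S (b*(3*k-3)+u) ∧ S (b*(3*k-3)+u) ≤ b*(3*k-3)+(3*k-3) := by
    intro u h1 h2
    exact ⟨shiftBlock_eq h1 h2, block_bounds hSU hb h1 h2⟩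
  have hGS' : ∀ u, 1 ≤ u → u ≤ 3*k-3 →
      shiftBlock k b S' u = S' (b*(3*k-3)+u) - b*(3*k-3) ∧
      b*(3*k-3)+1 ≤ S' (b*(3*k-3)+u) ∧ S' (b*(3*k-3)+u) ≤ b*(3*k-3)+(3*k-3) := by
    intro u h1 h2
    exact ⟨shiftBlock_eq h1 h2, block_bounds hSU' hb h1 h2⟩
  have hPperm : IsPerm n P := by
    refine ⟨?_, ?_, ?_⟩
    · intro x h1 h2
      rcases Classical.em (b*(3*k-3)+1 ≤ x ∧ x ≤ b*(3*k-3)+(3*k-3)) with h | h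
      · rw [hPin x h.1 h.2]
        have := hH1 (x - b*(3*k-3)) (by omega) (by omega)
        omega
      · rw [hPout x (by omega)]
        exact hSU.1.1 x h1 h2
    · intro x y h1 h2 h3 h4 he
      rcases Classical.em (b*(3*k-3)+1 ≤ x ∧ x ≤ b*(3*k-3)+(3*k-3)) with hx | hx <;>
        rcases Classical.em (b*(3*k-3)+1 ≤ y ∧ y ≤ b*(3*k-3)+(3*k-3)) with hy | hy
      · rw [hPin x hx.1 hx.2, hPin y hy.1 hy.2] at he
        have := hHinj (x - b*(3*k-3)) (y - b*(3*k-3)) (by omega) (by omega)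
          (by omega) (by omega) (by omega)
        omega
      · exfalso
        rw [hPin x hx.1 hx.2, hPout y (by omega)] at he
        have hby := blockOf_facts hk hdvd h3 h4
        have hSy := S_block_val hk hdvd hSU h3 h4
        have hne : (y-1)/(3*k-3) ≠ b := by
          intro hh
          rw [hh] at hby
          omega
        have hH := hH1 (x - b*(3*k-3)) (by omega) (by omega)
        rcases lt_or_gt_of_ne hne with h | h
        · have := mul_step (N := 3*k-3) h
          omega
        · have := mul_step (N := 3*k-3) h
          omega
      · exfalso
        rw [hPout x (by omega), hPin y hy.1 hy.2] at he
        have hbx := blockOf_facts hk hdvd h1 h2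
        have hSx := S_block_val hk hdvd hSU h1 h2
        have hne : (x-1)/(3*k-3) ≠ b := by
          intro hh
          rw [hh] at hbx
          omega
        have hH := hH1 (y - b*(3*k-3)) (by omega) (by omega)
        rcases lt_or_gt_of_ne hne with h | h
        · have := mul_step (N := 3*k-3) h
          omega
        · have := mul_step (N := 3*k-3) h
          omega
      · rw [hPout x (by omega), hPout y (by omega)] at he
        exact hSU.1.2.1 x y h1 h2 h3 h4 he
    · intro x hx
      rw [hPout x (by omega)]
      exact hSU.1.2.2 x hx
  have hPcons : Consistent n R P := by
    intro x y h1 h2 h3 h4 hR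
    rcases Classical.em (x = y) with he | he
    · rw [he]
    have hS1 : S x < S y := by
      have := hcS x y h1 h2 h3 h4 hR
      rcases eq_or_lt_of_le this with h | h
      · exact absurd (hSU.1.2.1 x y h1 h2 h3 h4 h) he
      · exact h
    have hS2 : S' x < S' y := by
      have := hcS' x y h1 h2 h3 h4 hR
      rcases eq_or_lt_of_le this with h | h
      · exact absurd (hSU'.1.2.1 x y h1 h2 h3 h4 h) he
      · exact h
    rcases Classical.em (b*(3*k-3)+1 ≤ x ∧ x ≤ b*(3*k-3)+(3*k-3)) with hx | hx <;>
      rcases Classical.em (b*(3*k-3)+1 ≤ y ∧ y ≤ b*(3*k-3)+(3*k-3)) with hy | hy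
    · rw [hPin x hx.1 hx.2, hPin y hy.1 hy.2]
      have hGu := hGS (x - b*(3*k-3)) (by omega) (by omega)
      have hGv := hGS (y - b*(3*k-3)) (by omega) (by omega)
      have hGu' := hGS' (x - b*(3*k-3)) (by omega) (by omega)
      have hGv' := hGS' (y - b*(3*k-3)) (by omega) (by omega)
      have hex : b*(3*k-3) + (x - b*(3*k-3)) = x := by omega
      have hey : b*(3*k-3) + (y - b*(3*k-3)) = y := by omega
      rw [hex] at hGu hGu'
      rw [hey] at hGv hGv'
      have hlt := hcons (x - b*(3*k-3)) (y - b*(3*k-3)) (by omega) (by omega)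
        (by omega) (by omega) (by omega) (by omega)
      have := hHlt (x - b*(3*k-3)) (y - b*(3*k-3)) (by omega) (by omega)
        (by omega) (by omega) hlt
      omega
    · rw [hPin x hx.1 hx.2, hPout y (by omega)]
      have hby := blockOf_facts hk hdvd h3 h4
      have hSy := S_block_val hk hdvd hSU h3 h4
      have hSx := S_block_val hk hdvd hSU h1 h2
      rw [blockOf_eq hk hx.1 hx.2] at hSx
      have hne : (y-1)/(3*k-3) ≠ b := by
        intro hh
        rw [hh] at hby
        omega
      have hH := hH1 (x - b*(3*k-3)) (by omega) (by omega)
      rcases lt_or_gt_of_ne hne with h | h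
      · have := mul_step (N := 3*k-3) h
        omega
      · have := mul_step (N := 3*k-3) h
        omega
    · rw [hPout x (by omega), hPin y hy.1 hy.2]
      have hbx := blockOf_facts hk hdvd h1 h2
      have hSx := S_block_val hk hdvd hSU h1 h2
      have hSy := S_block_val hk hdvd hSU h3 h4
      rw [blockOf_eq hk hy.1 hy.2] at hSy
      have hne : (x-1)/(3*k-3) ≠ b := by
        intro hh
        rw [hh] at hbx
        omega
      have hH := hH1 (y - b*(3*k-3)) (by omega) (by omega)
      rcases lt_or_gt_of_ne hne with h | h
      · have := mul_step (N := 3*k-3) h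
        omega
      · have := mul_step (N := 3*k-3) h
        omega
    · rw [hPout x (by omega), hPout y (by omega)]
      omega
  refine ⟨P, hPperm, hPcons, ?_⟩
  -- === the long increasing subsequence of P ===
  have hB1 : 1 ≤ n/(3*k-3) := by omega
  obtain ⟨cl, hcl⟩ : ∃ cl : ℕ → ℕ, ∀ j, cl j =
      if j < f p₀ then j+1 else if j = f p₀ then p₀ else 2*k-3+j := ⟨_, fun _ => rfl⟩
  have hclb : ∀ j, j ≤ k → 1 ≤ cl j ∧ cl j ≤ 3*k-3 := by
    intro j hj; rw [hcl]; split_ifs <;> omega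
  have hclmono : ∀ j, j < k → cl j < cl (j+1) := by
    intro j hj; rw [hcl, hcl]; split_ifs <;> omega
  have hπa : ∀ j, j < f p₀ → partOf (3*k-3) k f (cl j) = j+1 := by
    intro j hj
    have : cl j = j + 1 := by rw [hcl]; rw [if_pos hj]
    rw [this, pf_head (by omega)]
  have hπb : partOf (3*k-3) k f (cl (f p₀)) = f p₀ := by
    have : cl (f p₀) = p₀ := by rw [hcl]; rw [if_neg (by omega), if_pos rfl]
    rw [this, pf_mid hk hp1 hp2]
  have hπc : ∀ j, f p₀ < j → j ≤ k → partOf (3*k-3) k f (cl j) = j := by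
    intro j hj1 hj2
    have : cl j = 2*k-3+j := by rw [hcl]; rw [if_neg (by omega), if_neg (by omega)]
    rw [this, pf_tail hk (by omega)]
    omega
  have hltcl : ∀ j, j < k → lt (cl j) (cl (j+1)) := by
    intro j hj
    rw [hltdef]
    rcases lt_trichotomy (j+1) (f p₀) with hc | hc | hc
    · exact Or.inl (by rw [hπa j (by omega), hπa (j+1) hc]; omega)
    · -- j+1 = f p₀ : the head of part f p₀ followed by p₀
      have e1 : partOf (3*k-3) k f (cl j) = f p₀ := by rw [hπa j (by omega)]; omega
      have e2 : partOf (3*k-3) k f (cl (j+1)) = f p₀ := by rw [hc]; exact hπb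
      refine Or.inr ⟨by rw [e1, e2], Or.inl ⟨e1, ?_⟩⟩
      have ecl1 : cl j = f p₀ := by rw [hcl]; rw [if_pos (by omega)]; omega
      have ecl2 : cl (j+1) = p₀ := by rw [hc, hcl]; rw [if_neg (by omega), if_pos rfl]
      rw [ecl1, ecl2]
      apply hGf'.2.2 (f p₀) p₀ (by omega) (by omega) (by omega) (by omega)
      rw [pf_head (by omega), pf_mid hk hp1 hp2]
      omega
    · refine Or.inl ?_
      rcases Nat.lt_or_ge j (f p₀) with hj' | hj'
      · rw [hπa j hj', hπc (j+1) hc (by omega)]; omega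
      · rcases Nat.eq_or_lt_of_le hj' with hj'' | hj''
        · rw [← hj'', hπb, hπc (f p₀ + 1) (by omega) (by omega)]
          omega
        · rw [hπc j hj'' (by omega), hπc (j+1) hc (by omega)]
          omega
  -- global index sequence
  obtain ⟨idx, hidx⟩ : ∃ idx : ℕ → ℕ, ∀ t, idx t =
      if t < k*b then (t/k)*(3*k-3) + t % k + 1
      else if t ≤ k*b + k then b*(3*k-3) + cl (t - k*b)
      else ((t-1)/k)*(3*k-3) + (t-1) % k + 1 := ⟨_, fun _ => rfl⟩
  have region1 : ∀ t, t < k*b →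
      ∃ q r, q < b ∧ r < k ∧ t = q*k + r ∧ idx t = q*(3*k-3) + r + 1 := by
    intro t ht
    refine ⟨t/k, t%k, ?_, Nat.mod_lt _ (by omega), ?_, ?_⟩
    · have hc : b*k = k*b := by ring
      exact (Nat.div_lt_iff_lt_mul (by omega : 0 < k)).mpr (by omega)
    · have h := Nat.div_add_mod t k
      have h2 : k*(t/k) = (t/k)*k := by ring
      omega
    · rw [hidx, if_pos ht]
  have region3 : ∀ t, k*b+k < t → t ≤ k*(n/(3*k-3)) →
      ∃ q r, b < q ∧ q < n/(3*k-3) ∧ r < k ∧ t-1 = q*k + r ∧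
        idx t = q*(3*k-3) + r + 1 := by
    intro t h1 h2
    refine ⟨(t-1)/k, (t-1)%k, ?_, ?_, Nat.mod_lt _ (by omega), ?_, ?_⟩
    · have ha : (b+1)*k ≤ t-1 := by
        have : (b+1)*k = k*b+k := by ring
        omega
      have := (Nat.le_div_iff_mul_le (by omega : 0 < k)).mpr ha
      omega
    · have ha : t - 1 < (n/(3*k-3))*k := by
        have : (n/(3*k-3))*k = k*(n/(3*k-3)) := by ring
        omega
      exact (Nat.div_lt_iff_lt_mul (by omega : 0 < k)).mpr ha
    · have h := Nat.div_add_mod (t-1) k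
      have h2 : k*((t-1)/k) = ((t-1)/k)*k := by ring
      omega
    · rw [hidx, if_neg (by omega), if_neg (by omega)]
  have region2 : ∀ t, k*b ≤ t → t ≤ k*b + k → idx t = b*(3*k-3) + cl (t - k*b) := by
    intro t h1 h2
    rw [hidx, if_neg (by omega), if_pos h2]
  have hrange : ∀ t, t < k*(n/(3*k-3)) + 1 → 1 ≤ idx t ∧ idx t ≤ n := by
    intro t ht
    rcases lt_or_ge t (k*b) with h1 | h1
    · obtain ⟨q, r, hq, hr, ht', he⟩ := region1 t h1
      have := mul_step (N := 3*k-3) (show q < n/(3*k-3) by omega)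
      omega
    · rcases le_or_gt t (k*b+k) with h2 | h2
      · rw [region2 t h1 h2]
        have := hclb (t - k*b) (by omega)
        omega
      · obtain ⟨q, r, hbq, hq, hr, ht', he⟩ := region3 t h2 (by omega)
        have := mul_step (N := 3*k-3) hq
        omega
  have hadj : ∀ t, t+1 < k*(n/(3*k-3)) + 1 → idx t < idx (t+1) ∧ P (idx t) < P (idx (t+1)) := by
    intro t ht
    rcases lt_or_ge (t+1) (k*b) with hc1 | hc1
    · -- case 1 : both in an early block
      obtain ⟨q, r, hqb, hrk, hts, he⟩ := region1 t (by omega)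
      obtain ⟨q2, r2, hqb2, hrk2, hts2, he2⟩ := region1 (t+1) hc1
      have hqB : q < n/(3*k-3) := by omega
      have hout1 : P (idx t) = S (idx t) := by
        apply hPout
        have := mul_step (N := 3*k-3) hqb
        omega
      have hout2 : P (idx (t+1)) = S (idx (t+1)) := by
        apply hPout
        have := mul_step (N := 3*k-3) hqb2
        omega
      rcases lt_or_ge (r+1) k with hrr | hrr
      · obtain ⟨hq2, hr2⟩ : q2 = q ∧ r2 = r + 1 := dm_unique hrk2 hrr (by omega)
        rw [hq2, hr2] at he2
        constructor
        · omega
        · rw [hout1, hout2]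
          have hic := head_incr hk hSU hqB (r := r+1) (r' := r+2) (by omega) (by omega) (by omega)
          have ex : q*(3*k-3) + (r+1) = idx t := by omega
          have ey : q*(3*k-3) + (r+2) = idx (t+1) := by omega
          rw [ex, ey] at hic
          exact hic
      · have hq1k : (q+1)*k = q*k + k := by ring
        obtain ⟨hq2, hr2⟩ : q2 = q + 1 ∧ r2 = 0 := dm_unique hrk2 (by omega) (by omega)
        rw [hq2, hr2] at he2
        have hqN : (q+1)*(3*k-3) = q*(3*k-3) + (3*k-3) := by ring
        constructor
        · omega
        · rw [hout1, hout2]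
          have hv1 := block_bounds hSU hqB (q := r+1) (by omega) (by omega)
          have hv2 := block_bounds hSU (show q+1 < n/(3*k-3) by omega) (q := 1) (by omega) (by omega)
          have ex : q*(3*k-3) + (r+1) = idx t := by omega
          have ey : (q+1)*(3*k-3) + 1 = idx (t+1) := by omega
          rw [ex] at hv1
          rw [ey] at hv2
          omega
    · rcases lt_or_ge t (k*b) with hc2 | hc2
      · -- case 2 : entering block b
        have he2 : t+1 = k*b := by omega
        obtain ⟨q, r, hqb, hrk, hts, he⟩ := region1 t hc2
        have hqB : q < n/(3*k-3) := by omega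
        have hcl0 : cl 0 = 1 := by rw [hcl]; split_ifs <;> omega
        have hidx2 : idx (t+1) = b*(3*k-3) + 1 := by
          rw [region2 (t+1) (by omega) (by omega)]
          have : t+1 - k*b = 0 := by omega
          rw [this, hcl0]
        have hout1 : P (idx t) = S (idx t) := by
          apply hPout
          have := mul_step (N := 3*k-3) hqb
          omega
        have hin2 : P (idx (t+1)) = b*(3*k-3) + rk (3*k-3) lt 1 := by
          rw [hidx2, hPin _ (by omega) (by omega)]
          congr 1
          congr 1
          omega
        have hv1 := block_bounds hSU hqB (q := r+1) (by omega) (by omega)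
        have ex : q*(3*k-3) + (r+1) = idx t := by omega
        rw [ex] at hv1
        have hstep := mul_step (N := 3*k-3) hqb
        have hH := hH1 1 (by omega) (by omega)
        constructor
        · omega
        · rw [hout1, hin2]
          omega
      · rcases le_or_gt (t+1) (k*b+k) with hc3 | hc3
        · -- case 3 : inside block b
          have hj : t - k*b < k := by omega
          have hi1 : idx t = b*(3*k-3) + cl (t - k*b) := region2 t hc2 (by omega)
          have hi2 : idx (t+1) = b*(3*k-3) + cl (t - k*b + 1) := by
            rw [region2 (t+1) (by omega) hc3]
            congr 2
            omega
          have hb1 := hclb (t - k*b) (by omega)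
          have hb2 := hclb (t - k*b + 1) (by omega)
          have hmono := hclmono (t - k*b) hj
          constructor
          · omega
          · rw [hi1, hi2, hPin _ (by omega) (by omega), hPin _ (by omega) (by omega)]
            have ex : b*(3*k-3) + cl (t - k*b) - b*(3*k-3) = cl (t - k*b) := by omega
            have ey : b*(3*k-3) + cl (t - k*b + 1) - b*(3*k-3) = cl (t - k*b + 1) := by omega
            rw [ex, ey]
            have := hHlt (cl (t - k*b)) (cl (t - k*b + 1)) (by omega) (by omega)
              (by omega) (by omega) (hltcl (t - k*b) hj)
            omega
        · rcases lt_or_ge t (k*b+k+1) with hc4 | hc4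
          · -- case 4 : leaving block b
            have ht4 : t = k*b + k := by omega
            have hclk : cl k = 3*k-3 := by rw [hcl]; split_ifs <;> omega
            have hi1 : idx t = b*(3*k-3) + (3*k-3) := by
              rw [region2 t hc2 (by omega)]
              have : t - k*b = k := by omega
              rw [this, hclk]
            obtain ⟨q, r, hbq, hqB, hrk, hts, he⟩ := region3 (t+1) (by omega) (by omega)
            have hq1k : (b+1)*k = b*k + k := by ring
            have hbk : b*k = k*b := by ring
            obtain ⟨hq2, hr2⟩ : q = b + 1 ∧ r = 0 := dm_unique hrk (by omega) (by omega)
            rw [hq2, hr2] at he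
            have hqN : (b+1)*(3*k-3) = b*(3*k-3) + (3*k-3) := by ring
            have hi2 : idx (t+1) = b*(3*k-3) + (3*k-3) + 1 := by omega
            have hin1 : P (idx t) = b*(3*k-3) + rk (3*k-3) lt (3*k-3) := by
              rw [hi1, hPin _ (by omega) (by omega)]
              congr 1
              congr 1
              omega
            have hout2 : P (idx (t+1)) = S (idx (t+1)) := by
              apply hPout
              omega
            have hv2 := block_bounds hSU (show b+1 < n/(3*k-3) by omega) (q := 1)
              (by omega) (by omega)
            have ey : (b+1)*(3*k-3) + 1 = idx (t+1) := by omega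
            rw [ey] at hv2
            have hH := hH1 (3*k-3) (by omega) (by omega)
            constructor
            · omega
            · rw [hin1, hout2]
              omega
          · -- case 5 : both in a late block
            obtain ⟨q, r, hbq, hqB, hrk, hts, he⟩ := region3 t (by omega) (by omega)
            obtain ⟨q2, r2, hbq2, hqB2, hrk2, hts2, he2⟩ := region3 (t+1) (by omega) (by omega)
            have hout1 : P (idx t) = S (idx t) := by
              apply hPout
              have := mul_step (N := 3*k-3) hbq
              omega
            have hout2 : P (idx (t+1)) = S (idx (t+1)) := by
              apply hPout
              have := mul_step (N := 3*k-3) hbq2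
              omega
            rcases lt_or_ge (r+1) k with hrr | hrr
            · obtain ⟨hq2, hr2⟩ : q2 = q ∧ r2 = r + 1 := dm_unique hrk2 hrr (by omega)
              rw [hq2, hr2] at he2
              constructor
              · omega
              · rw [hout1, hout2]
                have hic := head_incr hk hSU hqB (r := r+1) (r' := r+2)
                  (by omega) (by omega) (by omega)
                have ex : q*(3*k-3) + (r+1) = idx t := by omega
                have ey : q*(3*k-3) + (r+2) = idx (t+1) := by omega
                rw [ex, ey] at hic
                exact hic
            · have hq1k : (q+1)*k = q*k + k := by ring
              obtain ⟨hq2, hr2⟩ : q2 = q + 1 ∧ r2 = 0 := dm_unique hrk2 (by omega) (by omega)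
              rw [hq2, hr2] at he2
              rw [hq2] at hqB2
              have hqN : (q+1)*(3*k-3) = q*(3*k-3) + (3*k-3) := by ring
              constructor
              · omega
              · rw [hout1, hout2]
                have hv1 := block_bounds hSU hqB (q := r+1) (by omega) (by omega)
                have hv2 := block_bounds hSU hqB2 (q := 1) (by omega) (by omega)
                have ex : q*(3*k-3) + (r+1) = idx t := by omega
                have ey : (q+1)*(3*k-3) + 1 = idx (t+1) := by omega
                rw [ex] at hv1
                rw [ey] at hv2
                omega
  have hmem : k*(n/(3*k-3)) + 1 ∈ TSet k n P := by
    refine ⟨idx, ⟨?_, ?_⟩, ?_⟩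
    · intro t ht
      have := hrange t ht
      omega
    · exact fun s t hst htm => mono_of_adj (fun u hu => (hadj u hu).1) s t hst htm
    · apply roll_of_incr
      · have : k*1 ≤ k*(n/(3*k-3)) := Nat.mul_le_mul_left k hB1
        omega
      · intro t htm
        exact (hadj t htm).2
  exact le_maxRC hmem

end Aux7

/-- If every permutation of `{1, ..., n}` consistent with the partial order `R` has the
same length of a longest `k`-rollercoaster, then at most one permutation from `U` is
consistent with `R`. -/
theorem stmt17 (k n : ℕ) (hk : 4 ≤ k) (hdvd : (3 * k - 3) ∣ n)
    (R : ℕ → ℕ → Prop)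
    (hrefl : ∀ p, R p p)
    (hantisymm : ∀ p q, R p q → R q p → p = q)
    (htrans : ∀ p q r, R p q → R q r → R p r)
    (hconst : ∀ P P' : ℕ → ℕ, IsPerm n P → Consistent n R P →
      IsPerm n P' → Consistent n R P' → maxRCnat k n P = maxRCnat k n P') :
    ∀ S S' : ℕ → ℕ, InU k n S → InU k n S' →
      Consistent n R S → Consistent n R S' → ∀ p, S p = S' p := by
  intro S S' hSU hSU' hcS hcS' p
  by_contra hne
  have hp : 1 ≤ p ∧ p ≤ n := by
    by_contra h
    rw [hSU.1.2.2 p h, hSU'.1.2.2 p h] at hne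
    exact hne rfl
  obtain ⟨hbB, hp1, hp2⟩ := blockOf_facts hk hdvd hp.1 hp.2
  obtain ⟨f, hf, hGf⟩ := hSU.2 ((p-1)/(3*k-3)) hbB
  obtain ⟨f', hf', hGf'⟩ := hSU'.2 ((p-1)/(3*k-3)) hbB
  have hmid : ∃ p₀, k+1 ≤ p₀ ∧ p₀ ≤ 2*k-3 ∧ f p₀ ≠ f' p₀ := by
    by_contra hC
    push_neg at hC
    have hpart : ∀ u, 1 ≤ u → u ≤ 3*k-3 →
        partOf (3*k-3) k f u = partOf (3*k-3) k f' u := by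
      intro u h1 h2
      rcases le_or_gt u k with h | h
      · rw [pf_head h, pf_head h]
      · rcases le_or_gt (2*k-2) u with h' | h'
        · rw [pf_tail hk h', pf_tail hk h']
        · rw [pf_mid hk (by omega) (by omega), pf_mid hk (by omega) (by omega)]
          exact hC u (by omega) (by omega)
    have hdir : ∀ (T T' : ℕ → ℕ) (g g' : ℕ → ℕ),
        (∀ u, 1 ≤ u → u ≤ 3*k-3 → partOf (3*k-3) k g u = partOf (3*k-3) k g' u) →
        IsGammaPerm (3*k-3) k g T → IsGammaPerm (3*k-3) k g' T' →
        ∀ u v, 1 ≤ u → u ≤ 3*k-3 → 1 ≤ v → v ≤ 3*k-3 → T u < T v → T' u < T' v := by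
      intro T T' g g' hpq hGT hGT' u v h1 h2 h3 h4 hlt
      rcases lt_trichotomy (partOf (3*k-3) k g u) (partOf (3*k-3) k g v) with h | h | h
      · apply hGT'.2.2 u v h1 h2 h3 h4
        rw [← hpq u h1 h2, ← hpq v h3 h4]
        exact h
      · rcases lt_trichotomy u v with h' | h' | h'
        · exact absurd (hGT.2.1 u v h1 h' h4 h) (by omega)
        · exact absurd (h' ▸ hlt) (lt_irrefl _)
        · apply hGT'.2.1 v u h3 h' h2
          rw [← hpq u h1 h2, ← hpq v h3 h4]
          exact h.symm
      · exact absurd (hGT.2.2 v u h3 h4 h1 h2 h) (by omega)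
    have hiff : ∀ u v, 1 ≤ u → u ≤ 3*k-3 → 1 ≤ v → v ≤ 3*k-3 →
        (shiftBlock k ((p-1)/(3*k-3)) S u < shiftBlock k ((p-1)/(3*k-3)) S v ↔
         shiftBlock k ((p-1)/(3*k-3)) S' u < shiftBlock k ((p-1)/(3*k-3)) S' v) := by
      intro u v h1 h2 h3 h4
      constructor
      · exact hdir _ _ f f' hpart hGf hGf' u v h1 h2 h3 h4
      · exact hdir _ _ f' f (fun u h1 h2 => (hpart u h1 h2).symm) hGf' hGf u v h1 h2 h3 h4
    have heq := perm_eq_of_orderIso hGf.1 hGf'.1 hiff (p - ((p-1)/(3*k-3))*(3*k-3))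
    rw [shiftBlock_eq (by omega) (by omega), shiftBlock_eq (by omega) (by omega)] at heq
    have hmm : ((p-1)/(3*k-3))*(3*k-3) + (p - ((p-1)/(3*k-3))*(3*k-3)) = p := by omega
    rw [hmm] at heq
    have hv1 := S_block_val hk hdvd hSU hp.1 hp.2
    have hv2 := S_block_val hk hdvd hSU' hp.1 hp.2
    exact hne (by omega)
  obtain ⟨p₀, hm1, hm2, hm3⟩ := hmid
  rcases lt_or_gt_of_ne hm3 with hlt | hlt
  · obtain ⟨P, hPperm, hPcons, hPge⟩ := contra_key hk hdvd hSU hSU' hcS hcS' hbB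
      hf hGf hf' hGf' hm1 hm2 hlt
    have h1 := hconst S P hSU.1 hcS hPperm hPcons
    have h2 := maxRC_le_of_U hk hdvd hSU
    omega
  · obtain ⟨P, hPperm, hPcons, hPge⟩ := contra_key hk hdvd hSU' hSU hcS' hcS hbB
      hf' hGf' hf hGf hm1 hm2 hlt
    have h1 := hconst S' P hSU'.1 hcS' hPperm hPcons
    have h2 := maxRC_le_of_U hk hdvd hSU'
    omega

end Gamma
end
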